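/- arXiv:1704.07309 — 8 statements merged into one kernel-verified Lean document; each statement's English description precedes it below -/
import Mathlib

section
/- Leakage chain rule for quantum min-entropy of separable states: Let N, K, M ≥ 1, let ι be a finite index type, let p : ι → ℝ be nonnegative with Σ_k p_k = 1, and for each k ∈ ι let ρ_XZ^k be a density matrix on ℂ^{N·K} (with rows and columns indexed by Fin N × Fin K) and ρ_B^k a density matrix on ℂ^M. Let ρ = Σ_k p_k • (ρ_XZ^k ⊗ ρ_B^k), a density matrix indexed by (Fin N × Fin K) × Fin M. Suppose there exist c ≥ 0 and a density matrix σ_Z on ℂ^K such that Σ_k p_k • ρ_XZ^k ≤ c • ((N:ℝ)⁻¹ • (I_N ⊗ σ_Z)) in the Loewner order. Then there exists a density matrix σ_ZB on ℂ^{K·M} (indexed by Fin K × Fin M) such that ρ ≤ (c·M) • ((N:ℝ)⁻¹ • (I_N ⊗ σ_ZB)), where I_N ⊗ σ_ZB is reindexed via the natural identification of Fin N × (Fin K × Fin M) with (Fin N × Fin K) × Fin M. (In entropy terms: if the B-system has ℓ = log₂ M qubits, then H_min(X|ZB)_ρ ≥ H_min(X|Z)_ρ − ℓ.) -/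
open Matrix
open scoped ComplexOrder Kronecker MatrixOrder

/-! A density matrix is dominated by the identity, so for a separable state
`ρ = Σ_k p_k ρXZ^k ⊗ ρB^k ≤ (Σ_k p_k ρXZ^k) ⊗ 1 ≤ (c/N) (1 ⊗ σZ) ⊗ 1`.
Writing `1 = M · (1/M)` turns the right-hand side into `(c M / N) · 1 ⊗ σZB` with
`σZB = σZ ⊗ (1/M)`, the product of `σZ` with the maximally mixed state on `B`. -/

namespace Matrix

variable {𝕜 : Type*} [RCLike 𝕜]

section Kronecker

variable {l m p q : Type*}

lemma sub_kronecker (A B : Matrix l m 𝕜) (C : Matrix p q 𝕜) :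
    (A - B) ⊗ₖ C = A ⊗ₖ C - B ⊗ₖ C := by
  ext; simp [sub_mul]

lemma kronecker_sub (A : Matrix l m 𝕜) (B C : Matrix p q 𝕜) :
    A ⊗ₖ (B - C) = A ⊗ₖ B - A ⊗ₖ C := by
  ext; simp [mul_sub]

lemma sum_kronecker {ι : Type*} [Fintype ι] (A : ι → Matrix l m 𝕜) (B : Matrix p q 𝕜) :
    (∑ k, A k) ⊗ₖ B = ∑ k, A k ⊗ₖ B := by
  ext; simp [Finset.sum_mul, sum_apply]

end Kronecker

variable {m n : Type*} [Fintype m] [Fintype n]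

lemma PosSemidef.le_one_of_trace_eq_one [DecidableEq n] {ρ : Matrix n n 𝕜}
    (hρ : ρ.PosSemidef) (htr : ρ.trace = 1) : ρ ≤ 1 := by
  refine CFC.le_one (R := ℝ) (fun x hx => ?_) hρ.isHermitian
  obtain ⟨i, rfl⟩ := hρ.isHermitian.spectrum_real_eq_range_eigenvalues ▸ hx
  have hsum : ∑ j, hρ.isHermitian.eigenvalues j = 1 := by
    exact_mod_cast htr ▸ hρ.isHermitian.trace_eq_sum_eigenvalues.symm
  exact hsum ▸ Finset.single_le_sum (fun j _ => hρ.eigenvalues_nonneg j) (Finset.mem_univ i)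

lemma kronecker_le_kronecker_left {A B : Matrix m m 𝕜} {C : Matrix n n 𝕜} (hAB : A ≤ B)
    (hC : 0 ≤ C) : A ⊗ₖ C ≤ B ⊗ₖ C := by
  rw [le_iff, ← sub_kronecker]
  exact (le_iff.mp hAB).kronecker hC.posSemidef

lemma kronecker_le_kronecker_right {A : Matrix m m 𝕜} {B C : Matrix n n 𝕜} (hA : 0 ≤ A)
    (hBC : B ≤ C) : A ⊗ₖ B ≤ A ⊗ₖ C := by
  rw [le_iff, ← kronecker_sub]
  exact hA.posSemidef.kronecker (le_iff.mp hBC)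

lemma sum_smul_kronecker_le_kronecker_one [DecidableEq n] {ι : Type*} [Fintype ι]
    {p : ι → ℝ} (hp : ∀ k, 0 ≤ p k) {A : ι → Matrix m m 𝕜} (hA : ∀ k, 0 ≤ A k)
    {B : ι → Matrix n n 𝕜} (hB : ∀ k, B k ≤ 1) :
    ∑ k, p k • (A k ⊗ₖ B k) ≤ (∑ k, p k • A k) ⊗ₖ 1 := by
  rw [sum_kronecker]
  refine Finset.sum_le_sum fun k _ => ?_
  rw [smul_kronecker]
  exact smul_le_smul_of_nonneg_left (kronecker_le_kronecker_right (hA k) (hB k)) (hp k)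

variable (𝕜 n) in
noncomputable def maximallyMixed [DecidableEq n] : Matrix n n 𝕜 :=
  (Fintype.card n : ℝ)⁻¹ • 1

lemma posSemidef_maximallyMixed [DecidableEq n] : (maximallyMixed 𝕜 n).PosSemidef :=
  PosSemidef.one.smul (by positivity)

lemma trace_maximallyMixed [DecidableEq n] [Nonempty n] : (maximallyMixed 𝕜 n).trace = 1 := by
  simp [maximallyMixed, trace_one, RCLike.real_smul_eq_coe_mul]

end Matrix

theorem leakage_chain_rule_separable_general (N K M : ℕ) (hM : 1 ≤ M)
    (ι : Type) [Fintype ι]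
    (p : ι → ℝ) (hp : ∀ k, 0 ≤ p k)
    (ρXZ : ι → Matrix (Fin N × Fin K) (Fin N × Fin K) ℂ)
    (hρXZ : ∀ k, (ρXZ k).PosSemidef ∧ (ρXZ k).trace = 1)
    (ρB : ι → Matrix (Fin M) (Fin M) ℂ)
    (hρB : ∀ k, (ρB k).PosSemidef ∧ (ρB k).trace = 1)
    (c : ℝ)
    (σZ : Matrix (Fin K) (Fin K) ℂ) (hσZ : σZ.PosSemidef ∧ σZ.trace = 1)
    (hle : (c • ((N : ℝ)⁻¹ • ((1 : Matrix (Fin N) (Fin N) ℂ) ⊗ₖ σZ)) -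
        ∑ k, p k • ρXZ k).PosSemidef) :
    ∃ σZB : Matrix (Fin K × Fin M) (Fin K × Fin M) ℂ,
      σZB.PosSemidef ∧ σZB.trace = 1 ∧
      ((c * M) • ((N : ℝ)⁻¹ •
          (Matrix.reindex (Equiv.prodAssoc (Fin N) (Fin K) (Fin M)).symm
            (Equiv.prodAssoc (Fin N) (Fin K) (Fin M)).symm
            ((1 : Matrix (Fin N) (Fin N) ℂ) ⊗ₖ σZB))) -
        ∑ k, p k • (ρXZ k ⊗ₖ ρB k)).PosSemidef := by
  have : NeZero M := ⟨by omega⟩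
  refine ⟨σZ ⊗ₖ maximallyMixed ℂ (Fin M), hσZ.1.kronecker posSemidef_maximallyMixed,
    by rw [trace_kronecker, hσZ.2, trace_maximallyMixed, one_mul], ?_⟩
  rw [← le_iff]
  calc ∑ k, p k • (ρXZ k ⊗ₖ ρB k)
      ≤ (∑ k, p k • ρXZ k) ⊗ₖ 1 :=
        sum_smul_kronecker_le_kronecker_one hp (fun k => (hρXZ k).1.nonneg)
          fun k => (hρB k).1.le_one_of_trace_eq_one (hρB k).2
    _ ≤ (c • ((N : ℝ)⁻¹ • ((1 : Matrix (Fin N) (Fin N) ℂ) ⊗ₖ σZ))) ⊗ₖ 1 :=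
        kronecker_le_kronecker_left hle PosSemidef.one.nonneg
    _ = _ := by
      have hM0 : (M : ℝ) ≠ 0 := by positivity
      rw [← kronecker_assoc, ← reindex_symm, Equiv.symm_apply_apply, maximallyMixed,
        kronecker_smul, smul_kronecker, smul_kronecker, smul_smul, smul_smul, smul_smul,
        Fintype.card_fin]
      congr 1
      field_simp

/-- **Leakage chain rule for quantum min-entropy of separable states.**
Let `ρ = Σ_k p_k • (ρXZ^k ⊗ ρB^k)` be a separable state on `(X ⊗ Z) ⊗ B`, where the `B`
system has dimension `M`. If `Σ_k p_k • ρXZ^k ≤ c • ((1/N)·I_N ⊗ σ_Z)` for some density `σ_Z`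
(i.e. `H_min(X|Z)_ρ ≥ log N − log c`), then there is a density `σ_ZB` with
`ρ ≤ (c·M) • ((1/N)·I_N ⊗ σ_ZB)`, i.e. `H_min(X|ZB)_ρ ≥ H_min(X|Z)_ρ − log M`. -/
theorem leakage_chain_rule_separable (N K M : ℕ) (hN : 1 ≤ N) (hK : 1 ≤ K) (hM : 1 ≤ M)
    (ι : Type) [Fintype ι]
    (p : ι → ℝ) (hp : ∀ k, 0 ≤ p k) (hps : ∑ k, p k = 1)
    (ρXZ : ι → Matrix (Fin N × Fin K) (Fin N × Fin K) ℂ)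
    (hρXZ : ∀ k, (ρXZ k).PosSemidef ∧ (ρXZ k).trace = 1)
    (ρB : ι → Matrix (Fin M) (Fin M) ℂ)
    (hρB : ∀ k, (ρB k).PosSemidef ∧ (ρB k).trace = 1)
    (c : ℝ) (hc : 0 ≤ c)
    (σZ : Matrix (Fin K) (Fin K) ℂ) (hσZ : σZ.PosSemidef ∧ σZ.trace = 1)
    (hle : (c • ((N : ℝ)⁻¹ • ((1 : Matrix (Fin N) (Fin N) ℂ) ⊗ₖ σZ)) -
        ∑ k, p k • ρXZ k).PosSemidef) :
    ∃ σZB : Matrix (Fin K × Fin M) (Fin K × Fin M) ℂ,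
      σZB.PosSemidef ∧ σZB.trace = 1 ∧
      ((c * M) • ((N : ℝ)⁻¹ •
          (Matrix.reindex (Equiv.prodAssoc (Fin N) (Fin K) (Fin M)).symm
            (Equiv.prodAssoc (Fin N) (Fin K) (Fin M)).symm
            ((1 : Matrix (Fin N) (Fin N) ℂ) ⊗ₖ σZB))) -
        ∑ k, p k • (ρXZ k ⊗ₖ ρB k)).PosSemidef :=
  leakage_chain_rule_separable_general N K M hM ι p hp ρXZ hρXZ ρB hρB c σZ hσZ hle
end

section
/- Leakage chain rule for quantum min-entropy (general states): Let N, K, M ≥ 1 and let ρ be a density matrix on ℂ^{N·K·M} with rows and columns indexed by (Fin N × Fin K) × Fin M. Define the marginal (partial trace over the third system) ρ_XZ as the matrix indexed by Fin N × Fin K with entries ρ_XZ(u, v) = Σ_{m : Fin M} ρ((u,m), (v,m)). Suppose there exist c ≥ 0 and a density matrix σ_Z on ℂ^K with ρ_XZ ≤ c • ((N:ℝ)⁻¹ • (I_N ⊗ σ_Z)) in the Loewner order. Then there exists a density matrix σ_ZB on ℂ^{K·M} (indexed by Fin K × Fin M) such that ρ ≤ (c·M²) • ((N:ℝ)⁻¹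 • (I_N ⊗ σ_ZB)), where I_N ⊗ σ_ZB is reindexed via the natural identification of Fin N × (Fin K × Fin M) with (Fin N × Fin K) × Fin M. (In entropy terms: if the B-system has ℓ = log₂ M qubits, then H_min(X|ZB)_ρ ≥ H_min(X|Z)_ρ − 2ℓ, and this is tight.) -/
open Matrix
open scoped ComplexOrder Kronecker MatrixOrder

/-!
The witness is `σ_ZB = σ_Z ⊗ 1/M`. With `P b = 1 ⊗ |b⟩⟨b|`, operator Cauchy–Schwarz gives
`ρ = (∑ b, P b) ρ (∑ b, P b)ᴴ ≤ M ∑ b, P b ρ P b`, and adding the off-diagonal terms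
`(1 ⊗ |a⟩⟨b|) ρ (1 ⊗ |a⟩⟨b|)ᴴ` turns the right-hand side into `M (ρ_XZ ⊗ 1)`. Hence
`ρ ≤ M (ρ_XZ ⊗ 1) ≤ M (c/N) (1 ⊗ σ_Z ⊗ 1) = (c M² / N) (1 ⊗ σ_Z ⊗ 1/M)`.
-/

namespace Matrix

variable {R 𝕜 A B : Type*} [RCLike 𝕜]

def partialTraceRight [Fintype B] [AddCommMonoid R] (ρ : Matrix (A × B) (A × B) R) :
    Matrix A A R :=
  of fun u v => ∑ b, ρ (u, b) (v, b)

section Kronecker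

variable [DecidableEq A] [DecidableEq B]

theorem sum_one_kronecker_single_self [Fintype B] [Semiring R] :
    ∑ b : B, (1 : Matrix A A R) ⊗ₖ single b b 1 = 1 := by
  ext ⟨u, m⟩ ⟨v, m'⟩
  simp only [Matrix.sum_apply, kroneckerMap_apply, one_apply, single_apply, ite_and, mul_ite,
    mul_one, mul_zero, Finset.sum_ite_eq', Finset.mem_univ, ↓reduceIte, Prod.mk.injEq]
  split_ifs <;> rfl

theorem partialTraceRight_kronecker_one [Fintype A] [Fintype B] [CommSemiring R] [StarRing R]
    (ρ : Matrix (A × B) (A × B) R) :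
    partialTraceRight ρ ⊗ₖ (1 : Matrix B B R) =
      ∑ a, ∑ b, ((1 : Matrix A A R) ⊗ₖ single a b 1) * ρ * ((1 : Matrix A A R) ⊗ₖ single a b 1)ᴴ := by
  ext ⟨u, m⟩ ⟨v, m'⟩
  simp [partialTraceRight, mul_apply, Fintype.sum_prod_type, conjTranspose_kronecker', single_apply,
    one_apply, Matrix.sum_apply, ite_and, eq_comm]

end Kronecker

theorem sub_kronecker_s3 {l m n p : Type*} [NonUnitalNonAssocRing R] (X₁ X₂ : Matrix l m R)
    (Y : Matrix n p R) : (X₁ - X₂) ⊗ₖ Y = X₁ ⊗ₖ Y - X₂ ⊗ₖ Y :=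
  eq_sub_of_add_eq (by rw [← add_kronecker, sub_add_cancel])

theorem reindex_prodAssoc_symm_kronecker {l m n p q r : Type*} [Semigroup R] (X : Matrix l m R)
    (Y : Matrix n p R) (Z : Matrix q r R) :
    reindex (Equiv.prodAssoc l n q).symm (Equiv.prodAssoc m p r).symm (X ⊗ₖ (Y ⊗ₖ Z)) =
      X ⊗ₖ Y ⊗ₖ Z := by
  rw [← kronecker_assoc, ← reindex_symm, Equiv.symm_apply_apply]

theorem kronecker_le_kronecker_of_nonneg_right [Fintype A] [Fintype B] {X Y : Matrix A A 𝕜}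
    {C : Matrix B B 𝕜} (h : X ≤ Y) (hC : 0 ≤ C) : X ⊗ₖ C ≤ Y ⊗ₖ C := by
  rw [le_iff, ← sub_kronecker_s3]
  exact (le_iff.mp h).kronecker hC.posSemidef

theorem sum_mul_mul_conjTranspose_sum_le {ι m n : Type*} [Fintype ι] [Fintype m] [Fintype n]
    {ρ : Matrix n n 𝕜} (hρ : ρ.PosSemidef) (X : ι → Matrix m n 𝕜) :
    (∑ i, X i) * ρ * (∑ i, X i)ᴴ ≤ (Fintype.card ι : ℝ) • ∑ i, X i * ρ * (X i)ᴴ := by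
  have h : (2 : ℝ) • ((Fintype.card ι : ℝ) • ∑ i, X i * ρ * (X i)ᴴ -
      (∑ i, X i) * ρ * (∑ i, X i)ᴴ) = ∑ i, ∑ j, (X i - X j) * ρ * (X i - X j)ᴴ := by
    simp only [conjTranspose_sub, Matrix.sub_mul, Matrix.mul_sub, Finset.sum_sub_distrib,
      Matrix.sum_mul, Matrix.mul_sum, conjTranspose_sum, Finset.sum_const, Finset.card_univ,
      ← Finset.smul_sum]
    rw [Finset.sum_comm (f := fun i j => X i * ρ * (X j)ᴴ)]
    module
  have hsum : (∑ i, ∑ j, (X i - X j) * ρ * (X i - X j)ᴴ).PosSemidef :=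
    posSemidef_sum _ fun i _ => posSemidef_sum _ fun j _ => hρ.mul_mul_conjTranspose_same _
  have hhalf := hsum.smul (a := (2⁻¹ : ℝ)) (by norm_num)
  rw [le_iff]
  rwa [← h, smul_smul, inv_mul_cancel₀ two_ne_zero, one_smul] at hhalf

theorem PosSemidef.le_card_smul_partialTraceRight_kronecker_one [Fintype A] [Fintype B]
    [DecidableEq A] [DecidableEq B] {ρ : Matrix (A × B) (A × B) 𝕜} (hρ : ρ.PosSemidef) :
    ρ ≤ (Fintype.card B : ℝ) • (partialTraceRight ρ ⊗ₖ 1) := by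
  let E : B → B → Matrix (A × B) (A × B) 𝕜 := fun a b => 1 ⊗ₖ single a b 1
  calc ρ = (∑ a, E a a) * ρ * (∑ a, E a a)ᴴ := by simp [E, sum_one_kronecker_single_self]
    _ ≤ (Fintype.card B : ℝ) • ∑ a, E a a * ρ * (E a a)ᴴ := sum_mul_mul_conjTranspose_sum_le hρ _
    _ ≤ (Fintype.card B : ℝ) • ∑ a, ∑ b, E a b * ρ * (E a b)ᴴ := by
      gcongr with a
      exact Finset.single_le_sum (f := fun b => E a b * ρ * (E a b)ᴴ)
        (fun b _ => (hρ.mul_mul_conjTranspose_same _).nonneg) (Finset.mem_univ a)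
    _ = (Fintype.card B : ℝ) • (partialTraceRight ρ ⊗ₖ 1) := by
      rw [partialTraceRight_kronecker_one]

end Matrix

theorem leakage_chain_rule_general_general (N K M : ℕ) (hM : 1 ≤ M)
    (ρ : Matrix ((Fin N × Fin K) × Fin M) ((Fin N × Fin K) × Fin M) ℂ)
    (hρ : ρ.PosSemidef ∧ ρ.trace = 1)
    (c : ℝ)
    (σZ : Matrix (Fin K) (Fin K) ℂ) (hσZ : σZ.PosSemidef ∧ σZ.trace = 1)
    (hle : (c • ((N : ℝ)⁻¹ • ((1 : Matrix (Fin N) (Fin N) ℂ) ⊗ₖ σZ)) -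
        Matrix.of (fun u v : Fin N × Fin K => ∑ m : Fin M, ρ (u, m) (v, m))).PosSemidef) :
    ∃ σZB : Matrix (Fin K × Fin M) (Fin K × Fin M) ℂ,
      σZB.PosSemidef ∧ σZB.trace = 1 ∧
      ((c * M ^ 2) • ((N : ℝ)⁻¹ •
          (Matrix.reindex (Equiv.prodAssoc (Fin N) (Fin K) (Fin M)).symm
            (Equiv.prodAssoc (Fin N) (Fin K) (Fin M)).symm
            ((1 : Matrix (Fin N) (Fin N) ℂ) ⊗ₖ σZB))) - ρ).PosSemidef := by
  obtain ⟨hρ, -⟩ := hρ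
  obtain ⟨hσ, hσ_trace⟩ := hσZ
  have hM₀ : (M : ℝ) ≠ 0 := Nat.cast_ne_zero.mpr (Nat.one_le_iff_ne_zero.mp hM)
  refine ⟨σZ ⊗ₖ ((M : ℝ)⁻¹ • 1), hσ.kronecker (PosSemidef.one.smul (by positivity)), ?_, ?_⟩
  · rw [trace_kronecker, hσ_trace, trace_smul, trace_one, Fintype.card_fin, one_mul,
      Complex.real_smul]
    push_cast
    field_simp
  · rw [← le_iff]
    calc ρ ≤ (M : ℝ) • (partialTraceRight ρ ⊗ₖ 1) := by
          simpa using hρ.le_card_smul_partialTraceRight_kronecker_one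
      _ ≤ (M : ℝ) • ((c • ((N : ℝ)⁻¹ • ((1 : Matrix (Fin N) (Fin N) ℂ) ⊗ₖ σZ))) ⊗ₖ 1) := by
          gcongr
          exact kronecker_le_kronecker_of_nonneg_right hle PosSemidef.one.nonneg
      _ = _ := by
          rw [reindex_prodAssoc_symm_kronecker, kronecker_smul, smul_kronecker, smul_kronecker]
          simp only [smul_smul]
          congr 1
          field_simp

/-- **Leakage chain rule for quantum min-entropy (general states).**
Let `ρ` be a density matrix on `(X ⊗ Z) ⊗ B` where the `B` system has dimension `M`, and let
`ρ_XZ` be its marginal (partial trace over `B`). If `ρ_XZ ≤ c • ((1/N)·I_N ⊗ σ_Z)` for some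
density `σ_Z` (i.e. `H_min(X|Z)_ρ ≥ log N − log c`), then there is a density `σ_ZB` with
`ρ ≤ (c·M²) • ((1/N)·I_N ⊗ σ_ZB)`, i.e. `H_min(X|ZB)_ρ ≥ H_min(X|Z)_ρ − 2·log M`. -/
theorem leakage_chain_rule_general (N K M : ℕ) (hN : 1 ≤ N) (hK : 1 ≤ K) (hM : 1 ≤ M)
    (ρ : Matrix ((Fin N × Fin K) × Fin M) ((Fin N × Fin K) × Fin M) ℂ)
    (hρ : ρ.PosSemidef ∧ ρ.trace = 1)
    (c : ℝ) (hc : 0 ≤ c)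
    (σZ : Matrix (Fin K) (Fin K) ℂ) (hσZ : σZ.PosSemidef ∧ σZ.trace = 1)
    (hle : (c • ((N : ℝ)⁻¹ • ((1 : Matrix (Fin N) (Fin N) ℂ) ⊗ₖ σZ)) -
        Matrix.of (fun u v : Fin N × Fin K => ∑ m : Fin M, ρ (u, m) (v, m))).PosSemidef) :
    ∃ σZB : Matrix (Fin K × Fin M) (Fin K × Fin M) ℂ,
      σZB.PosSemidef ∧ σZB.trace = 1 ∧
      ((c * M ^ 2) • ((N : ℝ)⁻¹ •
          (Matrix.reindex (Equiv.prodAssoc (Fin N) (Fin K) (Fin M)).symm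
            (Equiv.prodAssoc (Fin N) (Fin K) (Fin M)).symm
            ((1 : Matrix (Fin N) (Fin N) ℂ) ⊗ₖ σZB))) - ρ).PosSemidef :=
  leakage_chain_rule_general_general N K M hM ρ hρ c σZ hσZ hle
end

section
/- Impossibility of quantum gap amplification: For all real numbers p, q with 0 < q < p < 1, let ψ = (√(1−p), √p) and φ = (√(1−q), √q) be vectors in ℂ². Then there is no 2×2 complex matrix Π such that Π and I − Π are both positive semidefinite, Re(ψ* Π ψ) > p, and Re(φ* Π φ) < q (here ψ* Π ψ = Σ_{i,j} conj(ψ_i) Π_{i,j} ψ_j). -/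
/-!
Write `Π = [[a, b], [b̄, d]]` and `Q(x, y) = a x² + 2 (Re b) x y - (1 - d) y²`, so that the
acceptance probability of `(√(1-r), √r)` exceeds `r` by exactly `Q(√(1-r), √r)`. Since
`a ≥ 0` and `1 - d ≥ 0`, the ratio `Q(x, y) / (x y)` is antitone in the slope `y / x`, and the
slope `√(r / (1-r))` grows with `r`. Hence `Q(ψ) > 0` forces `Q(φ) > 0`, i.e. `Π` cannot accept
`φ` with probability below `q`.
-/

open Matrix
open scoped ComplexOrder

/-- The pure state `(√(1−r), √r)` on one qubit, accepted with probability exactly `r`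
by the measurement in the computational basis. -/
noncomputable def ampState (r : ℝ) : Fin 2 → ℂ :=
  ![(Real.sqrt (1 - r) : ℂ), (Real.sqrt r : ℂ)]

lemma re_sum_conj_mul_mul_vecCons_ofReal {A : Matrix (Fin 2) (Fin 2) ℂ} (hA : A.IsHermitian)
    (x y : ℝ) :
    (∑ i, ∑ j, starRingEnd ℂ (![(x : ℂ), y] i) * A i j * ![(x : ℂ), y] j).re =
      (A 0 0).re * x ^ 2 + 2 * (A 0 1).re * x * y + (A 1 1).re * y ^ 2 := by
  have h10 : A 1 0 = starRingEnd ℂ (A 0 1) := by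
    simpa using congrFun (congrFun hA.eq 1) 0 |>.symm
  simp only [Fin.sum_univ_two, Fin.isValue, cons_val_zero, cons_val_one, cons_val_fin_one,
    Complex.conj_ofReal, h10, Complex.add_re, Complex.mul_re, Complex.ofReal_re, Complex.ofReal_im,
    zero_mul, sub_zero, Complex.mul_im, add_zero, mul_zero, Complex.conj_re, Complex.conj_im,
    mul_neg, neg_zero]
  ring

/-- From the identity
`x' y' Q(x, y) - x y Q(x', y') = (x y' - x' y) (a x x' + e y y')`. -/
lemma mul_quadForm_le_mul_quadForm {a b e x y x' y' : ℝ} (ha : 0 ≤ a) (he : 0 ≤ e)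
    (hxx' : 0 ≤ x * x') (hyy' : 0 ≤ y * y') (hslope : x * y' ≤ x' * y) :
    x' * y' * (a * x ^ 2 + 2 * b * x * y - e * y ^ 2) ≤
      x * y * (a * x' ^ 2 + 2 * b * x' * y' - e * y' ^ 2) := by
  have hweight : 0 ≤ a * (x * x') + e * (y * y') := by positivity
  nlinarith [mul_nonneg (sub_nonneg.2 hslope) hweight]

lemma sqrt_one_sub_mul_sqrt_le {p q : ℝ} (hq : 0 ≤ q) (hqp : q ≤ p) :
    √(1 - p) * √q ≤ √(1 - q) * √p := by
  rw [← Real.sqrt_mul' _ hq, ← Real.sqrt_mul' _ (hq.trans hqp)]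
  exact Real.sqrt_le_sqrt (by nlinarith)

lemma re_sum_ampState_sub {A : Matrix (Fin 2) (Fin 2) ℂ} (hA : A.IsHermitian) {r : ℝ}
    (hr : 0 ≤ r) :
    (∑ i, ∑ j, starRingEnd ℂ (ampState r i) * A i j * ampState r j).re - r =
      (A 0 0).re * √(1 - r) ^ 2 + 2 * (A 0 1).re * √(1 - r) * √r
        - (1 - (A 1 1).re) * √r ^ 2 := by
  rw [ampState, re_sum_conj_mul_mul_vecCons_ofReal hA, Real.sq_sqrt hr]
  ring

/-- **Impossibility of quantum gap amplification.**
For `0 < q < p < 1`, with `ψ = (√(1−p), √p)` and `φ = (√(1−q), √q)`, there is no binary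
measurement (BPOVM) `Π` on one qubit accepting `ψ` with probability greater than `p` and
`φ` with probability less than `q`. -/
theorem gap_amplification_impossible (p q : ℝ) (hq0 : 0 < q) (hqp : q < p) (hp1 : p < 1) :
    ¬ ∃ Pm : Matrix (Fin 2) (Fin 2) ℂ,
        Pm.PosSemidef ∧ ((1 : Matrix (Fin 2) (Fin 2) ℂ) - Pm).PosSemidef ∧
        p < (∑ i, ∑ j, (starRingEnd ℂ) (ampState p i) * Pm i j * ampState p j).re ∧
        (∑ i, ∑ j, (starRingEnd ℂ) (ampState q i) * Pm i j * ampState q j).re < q := by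
  rintro ⟨Pm, hP, hQ, hψ, hφ⟩
  have ha : 0 ≤ (Pm 0 0).re := (Complex.nonneg_iff.1 hP.diag_nonneg).1
  have he : 0 ≤ 1 - (Pm 1 1).re := by
    simpa using (Complex.nonneg_iff.1 (hQ.diag_nonneg (i := 1))).1
  have hψQ := re_sum_ampState_sub hP.isHermitian (hq0.le.trans hqp.le)
  have hφQ := re_sum_ampState_sub hP.isHermitian hq0.le
  have hφ_pos : 0 < √(1 - q) * √q :=
    mul_pos (Real.sqrt_pos.2 (by linarith)) (Real.sqrt_pos.2 hq0)
  have hmono := mul_quadForm_le_mul_quadForm (b := (Pm 0 1).re) ha he (by positivity)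
    (by positivity) (sqrt_one_sub_mul_sqrt_le hq0.le hqp.le)
  have hψ_gain := mul_pos hφ_pos (show 0 < _ from hψQ ▸ sub_pos.2 hψ)
  have hφ_loss := mul_nonpos_of_nonneg_of_nonpos (by positivity : 0 ≤ √(1 - p) * √p)
    (show _ ≤ 0 from hφQ ▸ (sub_neg.2 hφ).le)
  linarith
end

section
/- Density in a pure-tensor state forces product form: Let M, N ≥ 1, let ψ ∈ ℂ^M be a unit vector, let ρ be a density matrix on ℂ^N, and let δ ∈ (0, 1]. If σ' is a density matrix on ℂ^{M·N} (with rows and columns indexed by Fin M × Fin N) satisfying σ' ≤ (1/δ) • ((ψψ*) ⊗ ρ) in the Loewner order, where ψψ* is the rank-one matrix with entries ψ_i · conj(ψ_j), then there exists a density matrix σ on ℂ^N such that σ ≤ (1/δ) • ρ and σ' = (ψψ*) ⊗ σ. -/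
open Matrix
open scoped ComplexOrder Kronecker

/-!
Write `V = ψ ⊗ 1_N`, an isometry with `V Vᴴ = (ψψ*) ⊗ 1` and `V X Vᴴ = (ψψ*) ⊗ X`. Since
`0 ≤ σ' ≤ δ⁻¹ V ρ Vᴴ`, the kernel of `σ'` contains that of `V Vᴴ`, so `σ'` is supported on the
range of the projection `V Vᴴ` and `σ' = V σ Vᴴ` with `σ = Vᴴ σ' V`. Compressing the whole
inequality by `V` gives `σ ≤ δ⁻¹ ρ`, and `tr σ = tr σ'` because `V` is an isometry.
-/

namespace Matrix

variable {m n 𝕜 : Type*} [Fintype n] [RCLike 𝕜]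

theorem PosSemidef.mulVec_eq_zero_of_sub {A B : Matrix n n 𝕜} (hA : A.PosSemidef)
    (hBA : (B - A).PosSemidef) {x : n → 𝕜} (hx : B *ᵥ x = 0) : A *ᵥ x = 0 := by
  have hle := hBA.dotProduct_mulVec_nonneg x
  rw [sub_mulVec, hx, zero_sub, dotProduct_neg, neg_nonneg] at hle
  exact (hA.dotProduct_mulVec_zero_iff x).mp (le_antisymm hle (hA.dotProduct_mulVec_nonneg x))

theorem PosSemidef.mul_eq_zero_of_sub {A B : Matrix n n 𝕜} (hA : A.PosSemidef)
    (hBA : (B - A).PosSemidef) {X : Matrix n m 𝕜} (hX : B * X = 0) : A * X = 0 := by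
  ext i j
  have hcol : B *ᵥ (fun k => X k j) = 0 := by
    ext k; simpa [mulVec, dotProduct, mul_apply] using congrFun (congrFun hX k) j
  simpa [mulVec, dotProduct, mul_apply] using congrFun (hA.mulVec_eq_zero_of_sub hBA hcol) i

theorem PosSemidef.eq_mul_mul_conjTranspose_of_sub [Fintype m] [DecidableEq m] [DecidableEq n]
    {A : Matrix n n 𝕜} {V : Matrix n m 𝕜} {B : Matrix m m 𝕜} (hV : Vᴴ * V = 1)
    (hA : A.PosSemidef) (hle : (V * B * Vᴴ - A).PosSemidef) :
    A = V * (Vᴴ * A * V) * Vᴴ := by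
  have hker : A * (1 - V * Vᴴ) = 0 := by
    refine hA.mul_eq_zero_of_sub hle ?_
    simp only [Matrix.mul_sub, Matrix.mul_one, Matrix.mul_assoc]
    rw [← Matrix.mul_assoc Vᴴ V, hV, Matrix.one_mul, sub_self]
  have hright : A = A * (V * Vᴴ) := by
    rwa [Matrix.mul_sub, Matrix.mul_one, sub_eq_zero] at hker
  have hleft : A = V * Vᴴ * A := by
    simpa [Matrix.conjTranspose_mul, hA.isHermitian.eq, Matrix.mul_assoc]
      using congrArg (fun X => Xᴴ) hright
  calc A = V * Vᴴ * A * (V * Vᴴ) := by rw [← hleft, ← hright]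
    _ = V * (Vᴴ * A * V) * Vᴴ := by simp only [Matrix.mul_assoc]

variable {R : Type*} [CommSemiring R] [StarRing R]

def vecKroneckerOne (ψ : m → R) (n : Type*) [DecidableEq n] : Matrix (m × n) n R :=
  of fun p l => ψ p.1 * (1 : Matrix n n R) p.2 l

theorem conjTranspose_vecKroneckerOne_mul_self [Fintype m] [DecidableEq n] (ψ : m → R) :
    (vecKroneckerOne ψ n)ᴴ * vecKroneckerOne ψ n = (star ψ ⬝ᵥ ψ) • 1 := by
  ext k l
  simp [vecKroneckerOne, mul_apply, Fintype.sum_prod_type, one_apply, dotProduct,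
    apply_ite star, ite_mul, Finset.sum_ite_irrel, eq_comm]

theorem vecKroneckerOne_mul_mul_conjTranspose [DecidableEq n] (ψ : m → R) (X : Matrix n n R) :
    vecKroneckerOne ψ n * X * (vecKroneckerOne ψ n)ᴴ = vecMulVec ψ (star ψ) ⊗ₖ X := by
  ext ⟨i, k⟩ ⟨j, l⟩
  simp [vecKroneckerOne, mul_apply, one_apply, vecMulVec_apply,
    apply_ite star, mul_right_comm]

end Matrix

theorem dense_in_pure_tensor_general (M N : ℕ)
    (ψ : Fin M → ℂ) (hψ : ∑ i, Complex.normSq (ψ i) = 1)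
    (ρ : Matrix (Fin N) (Fin N) ℂ)
    (δ : ℝ)
    (σ' : Matrix (Fin M × Fin N) (Fin M × Fin N) ℂ)
    (hσ' : σ'.PosSemidef ∧ σ'.trace = 1)
    (hdense : (δ⁻¹ • (Matrix.vecMulVec ψ (star ψ) ⊗ₖ ρ) - σ').PosSemidef) :
    ∃ σ : Matrix (Fin N) (Fin N) ℂ,
      (σ.PosSemidef ∧ σ.trace = 1) ∧
      (δ⁻¹ • ρ - σ).PosSemidef ∧
      σ' = Matrix.vecMulVec ψ (star ψ) ⊗ₖ σ := by
  obtain ⟨hσ'psd, hσ'tr⟩ := hσ'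
  rw [← vecKroneckerOne_mul_mul_conjTranspose, ← Matrix.smul_mul, ← Matrix.mul_smul] at hdense
  set V := vecKroneckerOne ψ (Fin N)
  have hV : Vᴴ * V = 1 := by
    have hunit : star ψ ⬝ᵥ ψ = 1 := by
      rw [← Complex.ofReal_one, ← hψ]
      push_cast
      simp [dotProduct, Complex.normSq_eq_conj_mul_self]
    rw [conjTranspose_vecKroneckerOne_mul_self, hunit, one_smul]
  have hcompress : ∀ X : Matrix (Fin N) (Fin N) ℂ, Vᴴ * (V * X * Vᴴ) * V = X := fun X => by
    simp only [Matrix.mul_assoc]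
    rw [hV, Matrix.mul_one, ← Matrix.mul_assoc, hV, Matrix.one_mul]
  set σ := Vᴴ * σ' * V
  have hσ' : σ' = V * σ * Vᴴ := hσ'psd.eq_mul_mul_conjTranspose_of_sub hV hdense
  refine ⟨σ, ⟨hσ'psd.conjTranspose_mul_mul_same V, ?_⟩, ?_, ?_⟩
  · rw [← hσ'tr, hσ', Matrix.trace_mul_comm (V * σ), ← Matrix.mul_assoc, hV, Matrix.one_mul]
  · simpa only [Matrix.mul_sub, Matrix.sub_mul, hcompress] using
      hdense.conjTranspose_mul_mul_same V
  · rw [← vecKroneckerOne_mul_mul_conjTranspose, ← hσ']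

/-- **Density in a pure-tensor state forces product form.**
If `ψ` is a unit vector, `ρ` is a density matrix, `δ ∈ (0,1]`, and a density matrix `σ'` is
`δ`-dense in `(ψψ*) ⊗ ρ` (i.e. `σ' ≤ (1/δ) • ((ψψ*) ⊗ ρ)` in the Loewner order), then
`σ' = (ψψ*) ⊗ σ` for some density matrix `σ` that is `δ`-dense in `ρ`. -/
theorem dense_in_pure_tensor (M N : ℕ) (hM : 1 ≤ M) (hN : 1 ≤ N)
    (ψ : Fin M → ℂ) (hψ : ∑ i, Complex.normSq (ψ i) = 1)
    (ρ : Matrix (Fin N) (Fin N) ℂ) (hρ : ρ.PosSemidef ∧ ρ.trace = 1)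
    (δ : ℝ) (hδ0 : 0 < δ) (hδ1 : δ ≤ 1)
    (σ' : Matrix (Fin M × Fin N) (Fin M × Fin N) ℂ)
    (hσ' : σ'.PosSemidef ∧ σ'.trace = 1)
    (hdense : (δ⁻¹ • (Matrix.vecMulVec ψ (star ψ) ⊗ₖ ρ) - σ').PosSemidef) :
    ∃ σ : Matrix (Fin N) (Fin N) ℂ,
      (σ.PosSemidef ∧ σ.trace = 1) ∧
      (δ⁻¹ • ρ - σ).PosSemidef ∧
      σ' = Matrix.vecMulVec ψ (star ψ) ⊗ₖ σ :=
  dense_in_pure_tensor_general M N ψ hψ ρ δ σ' hσ' hdense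
end

section
/- Reverse Dense Model Theorem (classical): Let α be a finite nonempty type, let Y, Z, M be probability mass functions on α, let δ ∈ (0, 1], and let 𝒟 be a set of functions α → ℝ taking values in [0, 1]. Suppose M is δ-dense in Y, i.e., δ · M(x) ≤ Y(x) for every x ∈ α, and suppose that for every D ∈ 𝒟, |E_{x∼Z}[D(x)] − E_{x∼M}[D(x)]| ≤ ε. Then there exists a probability mass function X on α such that Z is δ-dense in X (i.e., δ · Z(x) ≤ X(x) for all x) and for every D ∈ 𝒟, |E_{x∼X}[D(x)] − E_{x∼Y}[D(x)]| ≤ ε. -/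
/-! Put `X := Y + δ • (Z - M) = (Y - δ • M) + δ • Z`. Density of `M` in `Y` makes `Y - δ • M`
nonnegative, so `δ • Z ≤ X`, and `X` has total mass one because `Z` and `M` do. Every test
`D` sees `X` and `Y` differ by exactly `δ` times its view of `Z` against `M`, which for
`δ ≤ 1` is at most `ε`. -/

open Matrix

section DenseShift

variable {α R : Type*} [Fintype α] [CommRing R]

theorem sum_add_smul_sub (Y Z M : α → R) (δ : R) :
    ∑ x, (Y + δ • (Z - M)) x = ∑ x, Y x + δ * (∑ x, Z x - ∑ x, M x) := by
  simp only [Pi.add_apply, Pi.smul_apply, Pi.sub_apply, smul_eq_mul, Finset.sum_add_distrib,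
    ← Finset.mul_sum, Finset.sum_sub_distrib]

theorem add_smul_sub_dotProduct_sub (Y Z M D : α → R) (δ : R) :
    (Y + δ • (Z - M)) ⬝ᵥ D - Y ⬝ᵥ D = δ * (Z ⬝ᵥ D - M ⬝ᵥ D) := by
  rw [add_dotProduct, smul_dotProduct, sub_dotProduct, smul_eq_mul, add_sub_cancel_left]

end DenseShift

theorem reverse_dense_model_theorem_general (α : Type) [Fintype α]
    (Y Z M : α → ℝ)
    (hYsum : ∑ x, Y x = 1)
    (hZnn : ∀ x, 0 ≤ Z x) (hZsum : ∑ x, Z x = 1)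
    (hMsum : ∑ x, M x = 1)
    (δ : ℝ) (hδ0 : 0 < δ) (hδ1 : δ ≤ 1)
    (𝒟 : Set (α → ℝ))
    (ε : ℝ)
    (hdense : ∀ x, δ * M x ≤ Y x)
    (hind : ∀ D ∈ 𝒟, |(∑ x, Z x * D x) - ∑ x, M x * D x| ≤ ε) :
    ∃ X : α → ℝ,
      (∀ x, 0 ≤ X x) ∧ (∑ x, X x = 1) ∧
      (∀ x, δ * Z x ≤ X x) ∧
      ∀ D ∈ 𝒟, |(∑ x, X x * D x) - ∑ x, Y x * D x| ≤ ε := by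
  set X := Y + δ • (Z - M)
  have hZX : ∀ x, δ * Z x ≤ X x := fun x => by
    simp only [X, Pi.add_apply, Pi.smul_apply, Pi.sub_apply, smul_eq_mul]
    linarith [hdense x]
  refine ⟨X, fun x => (mul_nonneg hδ0.le (hZnn x)).trans (hZX x), ?_, hZX, fun D hD => ?_⟩
  · rw [sum_add_smul_sub, hYsum, hZsum, hMsum, sub_self, mul_zero, add_zero]
  · change |X ⬝ᵥ D - Y ⬝ᵥ D| ≤ ε
    rw [add_smul_sub_dotProduct_sub, abs_mul, abs_of_pos hδ0]
    exact (mul_le_of_le_one_left (abs_nonneg _) hδ1).trans (hind D hD)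

/-- **Reverse Dense Model Theorem (classical).**
Let `Y, Z, M` be probability mass functions on a finite nonempty type `α`, `δ ∈ (0,1]`, and
`𝒟` a class of `[0,1]`-valued test functions. If `M` is `δ`-dense in `Y` and `Z, M` are
`ε`-indistinguishable by every `D ∈ 𝒟`, then there is a probability mass function `X` such
that `Z` is `δ`-dense in `X` and `X, Y` are `ε`-indistinguishable by every `D ∈ 𝒟`. -/
theorem reverse_dense_model_theorem (α : Type) [Fintype α] [Nonempty α]
    (Y Z M : α → ℝ)
    (hYnn : ∀ x, 0 ≤ Y x) (hYsum : ∑ x, Y x = 1)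
    (hZnn : ∀ x, 0 ≤ Z x) (hZsum : ∑ x, Z x = 1)
    (hMnn : ∀ x, 0 ≤ M x) (hMsum : ∑ x, M x = 1)
    (δ : ℝ) (hδ0 : 0 < δ) (hδ1 : δ ≤ 1)
    (𝒟 : Set (α → ℝ)) (h𝒟 : ∀ D ∈ 𝒟, ∀ x, D x ∈ Set.Icc (0 : ℝ) 1)
    (ε : ℝ)
    (hdense : ∀ x, δ * M x ≤ Y x)
    (hind : ∀ D ∈ 𝒟, |(∑ x, Z x * D x) - ∑ x, M x * D x| ≤ ε) :
    ∃ X : α → ℝ,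
      (∀ x, 0 ≤ X x) ∧ (∑ x, X x = 1) ∧
      (∀ x, δ * Z x ≤ X x) ∧
      ∀ D ∈ 𝒟, |(∑ x, X x * D x) - ∑ x, Y x * D x| ≤ ε :=
  reverse_dense_model_theorem_general α Y Z M hYsum hZnn hZsum hMsum δ hδ0 hδ1 𝒟 ε hdense hind
end

section
/- Concentration of quadratic forms over random signs (core of the existence of pseudorandom pure states): There exists a constant c > 0 such that for every N ≥ 1, every N×N complex matrix Π with Π and I − Π positive semidefinite, and every ε > 0, if α = (α₁, …, α_N) is chosen uniformly at random from {−1, 1}^N, then Pr[ |(1/N)·Re(Σ_{i,j} α_i α_j Π_{i,j}) − (1/N)·Re(tr Π)| ≥ ε ] ≤ 2·exp(−c·ε²·N). (In the paper's notation with N = 2^m: for the random pure state |ψ⟩ = Σ_i α_i 2^{−m/2} |i⟩, the acceptance probability ⟨ψ|Π|ψ⟩ concentrates around the acceptance probability tr(Π)/2^m of the maximally mixed state, with failure probability 2^{−Ω(ε²·2^m)}.) -/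
/-!
Write `α` for the random sign vector and `B = Re Π`. Since `0 ≤ B ≤ 1`, `B` is a contraction,
and the deviation to bound is the Rademacher chaos `Q(α) = αᵀBα - tr B = ∑_{i ≠ j} αᵢαⱼBᵢⱼ`.

Decoupling: for an independent random sign vector `γ`, the vectors `(1 - γ) α` and `(1 + γ) α`
live on complementary sets of coordinates, and `Q(α)` is the `γ`-average of the bilinear form
`((1 - γ) α)ᵀ B ((1 + γ) α)`. By Jensen, `𝔼 exp (t Q)` is at most the average over `γ` of the
moment generating functions of these bilinear forms. With the signs on the second set of
coordinates fixed, such a form is a Rademacher sum whose coefficient vector has squared norm at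
most `16 t² N` (here `‖B‖ ≤ 1` is used), so Hoeffding's lemma gives `𝔼 exp (t Q) ≤ exp (8 t² N)`.
A Chernoff bound with `t = ε / 16`, applied to `Q` and to `-Q`, gives the tail `2 exp (-ε² N / 32)`.
-/

open Finset Function Matrix
open scoped BigOperators ComplexOrder

section Signs

variable {ι : Type*}

def signs (b : ι → Bool) : ι → ℝ := fun i => if b i then 1 else -1

lemma signs_mul_self (b : ι → Bool) (i : ι) : signs b i * signs b i = 1 := by
  unfold signs; split <;> norm_num

lemma sq_one_add_signs_le (b : ι → Bool) (i : ι) : (1 + signs b i) ^ 2 ≤ 4 := by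
  unfold signs; split <;> norm_num

lemma sq_one_sub_signs_le (b : ι → Bool) (i : ι) : (1 - signs b i) ^ 2 ≤ 4 := by
  unfold signs; split <;> norm_num

variable [Fintype ι]

lemma signs_dotProduct_self (b : ι → Bool) : signs b ⬝ᵥ signs b = Fintype.card ι := by
  simp [dotProduct, signs_mul_self]

lemma dotProduct_mul_self_le {u : ι → ℝ} {K : ℝ} (hu : ∀ i, u i ^ 2 ≤ K) (c : ι → ℝ) :
    (u * c) ⬝ᵥ (u * c) ≤ K * (c ⬝ᵥ c) := by
  simp only [dotProduct, Pi.mul_apply, mul_sum]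
  exact sum_le_sum fun i _ => by nlinarith [hu i, mul_self_nonneg (c i)]

variable [DecidableEq ι]

lemma expect_signs_mul_eq_zero (i : ι) {F : (ι → Bool) → ℝ}
    (hF : ∀ b b', (∀ j ≠ i, b j = b' j) → F b = F b') :
    𝔼 b, signs b i * F b = 0 := by
  let flip : (ι → Bool) → ι → Bool := fun b => update b i (!b i)
  have hinv : Involutive flip := fun b => by simp [flip]
  have hflip : ∀ b, signs (flip b) i * F (flip b) = -(signs b i * F b) := fun b => by
    have hF' : F (flip b) = F b := hF _ _ fun j hj => by simp [flip, hj]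
    rw [hF']
    cases hb : b i <;> simp [flip, signs, hb]
  have := Fintype.expect_bijective flip hinv.bijective (fun b => -(signs b i * F b))
    (fun b => signs b i * F b) fun b => (hflip b).symm
  rw [expect_neg_distrib] at this
  linarith

lemma expect_signs (i : ι) : 𝔼 b, signs b i = 0 := by
  simpa using expect_signs_mul_eq_zero i (F := fun _ => 1) fun _ _ _ => rfl

lemma expect_signs_mul_signs (i j : ι) :
    𝔼 b, signs b i * signs b j = if i = j then 1 else 0 := by
  split_ifs with hij
  · simp [hij, signs_mul_self]
  · exact expect_signs_mul_eq_zero i fun b b' h => by simp only [signs, h j (Ne.symm hij)]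

lemma expect_prod_eq_prod_expect {κ : Type*} [Fintype κ] (f : ι → κ → ℝ) :
    𝔼 b : ι → κ, ∏ i, f i (b i) = ∏ i, 𝔼 t, f i t := by
  simp only [Fintype.expect_eq_sum_div_card, ← Fintype.prod_sum, prod_div_distrib, prod_const,
    Fintype.card_fun, Nat.cast_pow, card_univ]

lemma expect_exp_signs_dotProduct_le (w : ι → ℝ) :
    𝔼 b, Real.exp (signs b ⬝ᵥ w) ≤ Real.exp (w ⬝ᵥ w / 2) := by
  have hcosh : ∀ x : ℝ, 𝔼 t : Bool, Real.exp ((if t then 1 else -1) * x) = Real.cosh x := by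
    intro x
    rw [Fintype.expect_eq_sum_div_card, Fintype.sum_bool, Real.cosh_eq]
    simp
  calc 𝔼 b, Real.exp (signs b ⬝ᵥ w)
      = ∏ i, Real.cosh (w i) := by
        simp only [dotProduct, Real.exp_sum, ← hcosh]
        exact expect_prod_eq_prod_expect fun i (t : Bool) => Real.exp ((if t then 1 else -1) * w i)
    _ ≤ ∏ i, Real.exp (w i ^ 2 / 2) :=
        prod_le_prod (fun i _ => (Real.cosh_pos _).le) fun i _ => Real.cosh_le_exp_half_sq _
    _ = Real.exp (w ⬝ᵥ w / 2) := by simp [← Real.exp_sum, dotProduct, sum_div, sq]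

end Signs

lemma Real.exp_expect_le {Ω : Type*} [Fintype Ω] [Nonempty Ω] (f : Ω → ℝ) :
    Real.exp (𝔼 ω, f ω) ≤ 𝔼 ω, Real.exp (f ω) := by
  have hw : ∑ _ω : Ω, (Fintype.card Ω : ℝ)⁻¹ = 1 := by simp
  simpa [Fintype.expect_eq_sum_div_card, div_eq_inv_mul, mul_sum] using
    convexOn_exp.map_sum_le (t := univ) (p := f) (fun _ _ => by positivity) hw
      fun _ _ => Set.mem_univ _

lemma card_filter_le_div_card_le_exp_mul_expect {Ω : Type*} [Fintype Ω] (f : Ω → ℝ) {t : ℝ}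
    (ht : 0 ≤ t) (r : ℝ) :
    (#{ω | r ≤ f ω} : ℝ) / Fintype.card Ω ≤ Real.exp (-(t * r)) * 𝔼 ω, Real.exp (t * f ω) := by
  rw [mul_expect, Fintype.expect_eq_sum_div_card, card_filter]
  gcongr
  push_cast
  refine sum_le_sum fun ω _ => ?_
  split_ifs with h
  · rw [← Real.exp_add]
    exact Real.one_le_exp (by nlinarith)
  · positivity

section Chaos

variable {ι : Type*}

def merge (γ x y : ι → Bool) : ι → Bool := fun i => if γ i then y i else x i

variable [Fintype ι]

def chaos (a : Matrix ι ι ℝ) (b : ι → Bool) : ℝ := signs b ⬝ᵥ (a *ᵥ signs b) - a.trace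

/-- `(1 - signs γ) / 2` and `(1 + signs γ) / 2` are the indicators of a random splitting of the
coordinates; the factor `4` they carry compensates the chance `1 / 4` that `i` and `j ≠ i` fall
on the prescribed sides. -/
def decoupledChaos (a : Matrix ι ι ℝ) (γ b : ι → Bool) : ℝ :=
  ((1 - signs γ) * signs b) ⬝ᵥ (a *ᵥ ((1 + signs γ) * signs b))

lemma chaos_neg (a : Matrix ι ι ℝ) (b : ι → Bool) : chaos (-a) b = -chaos a b := by
  simp only [chaos, neg_mulVec, dotProduct_neg, trace_neg]
  ring

lemma decoupledChaos_merge (a : Matrix ι ι ℝ) (γ x y : ι → Bool) :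
    decoupledChaos a γ (merge γ x y) =
      signs x ⬝ᵥ ((1 - signs γ) * (a *ᵥ ((1 + signs γ) * signs y))) := by
  have hx : (1 - signs γ) * signs (merge γ x y) = (1 - signs γ) * signs x := by
    funext i; by_cases h : γ i <;> simp [merge, signs, h]
  have hy : (1 + signs γ) * signs (merge γ x y) = (1 + signs γ) * signs y := by
    funext i; by_cases h : γ i <;> simp [merge, signs, h]
  rw [decoupledChaos, hx, hy]
  simp only [dotProduct, Pi.mul_apply]
  exact sum_congr rfl fun i _ => by ring

variable [DecidableEq ι]

lemma expect_expect_merge {M : Type*} [AddCommMonoid M] [Module ℚ≥0 M] (γ : ι → Bool)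
    (F : (ι → Bool) → M) : 𝔼 y, 𝔼 x, F (merge γ x y) = 𝔼 b, F b := by
  have hinv : Involutive fun p : (ι → Bool) × (ι → Bool) => (merge γ p.1 p.2, merge γ p.2 p.1) :=
    fun p => by ext i <;> by_cases h : γ i <;> simp [merge, h]
  calc 𝔼 y, 𝔼 x, F (merge γ x y)
      = 𝔼 p : (ι → Bool) × (ι → Bool), F (merge γ p.1 p.2) := by
        rw [expect_comm, ← expect_product', univ_product_univ]
    _ = 𝔼 p : (ι → Bool) × (ι → Bool), F p.1 :=
        Fintype.expect_bijective _ hinv.bijective _ _ fun _ => rfl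
    _ = 𝔼 b, F b := by
        rw [← univ_product_univ, expect_product' _ _ fun x (_ : ι → Bool) => F x]
        simp only [Fintype.expect_const]

lemma expect_one_sub_signs_mul_one_add_signs (i j : ι) :
    𝔼 γ, (1 - signs γ i) * (1 + signs γ j) = 1 - if i = j then 1 else 0 := by
  simp only [sub_mul, mul_add, one_mul, mul_one, expect_sub_distrib, expect_add_distrib,
    expect_signs, expect_signs_mul_signs, Fintype.expect_const]
  ring

lemma expect_decoupledChaos (a : Matrix ι ι ℝ) (b : ι → Bool) :
    𝔼 γ, decoupledChaos a γ b = chaos a b := by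
  have hexpand : ∀ γ, decoupledChaos a γ b =
      ∑ i, ∑ j, (1 - signs γ i) * (1 + signs γ j) * (signs b i * a i j * signs b j) := by
    intro γ
    simp only [decoupledChaos, dotProduct, mulVec, mul_sum, Pi.mul_apply, Pi.sub_apply,
      Pi.add_apply, Pi.one_apply]
    exact sum_congr rfl fun i _ => sum_congr rfl fun j _ => by ring
  simp_rw [hexpand, expect_sum_comm, ← expect_mul, expect_one_sub_signs_mul_one_add_signs]
  simp only [sub_mul, one_mul, ite_mul, zero_mul, sum_sub_distrib, sum_ite_eq, mem_univ, if_true,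
    mul_right_comm _ (a _ _), signs_mul_self]
  simp only [chaos, trace, Matrix.diag, dotProduct, mulVec, mul_sum]
  exact congrArg (· - _) (sum_congr rfl fun i _ => sum_congr rfl fun j _ => by ring)

variable {a : Matrix ι ι ℝ}

lemma expect_exp_mul_decoupledChaos_le (ha : ∀ z, (a *ᵥ z) ⬝ᵥ (a *ᵥ z) ≤ z ⬝ᵥ z) (t : ℝ)
    (γ : ι → Bool) :
    𝔼 b, Real.exp (t * decoupledChaos a γ b) ≤ Real.exp (8 * t ^ 2 * Fintype.card ι) := by
  rw [← expect_expect_merge γ]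
  refine expect_le univ_nonempty fun y _ => ?_
  set v := (1 + signs γ) * signs y
  set w := t • ((1 - signs γ) * (a *ᵥ v))
  have hv : v ⬝ᵥ v ≤ 4 * Fintype.card ι := by
    simpa [signs_dotProduct_self] using
      dotProduct_mul_self_le (u := 1 + signs γ) (sq_one_add_signs_le γ) (signs y)
  have hw : w ⬝ᵥ w ≤ 16 * t ^ 2 * Fintype.card ι := by
    have := dotProduct_mul_self_le (u := 1 - signs γ) (sq_one_sub_signs_le γ) (a *ᵥ v)
    simp only [w, smul_dotProduct, dotProduct_smul, smul_eq_mul]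
    nlinarith [ha v, sq_nonneg t]
  calc 𝔼 x, Real.exp (t * decoupledChaos a γ (merge γ x y))
      = 𝔼 x, Real.exp (signs x ⬝ᵥ w) := by
        simp only [decoupledChaos_merge, w, v, dotProduct_smul, smul_eq_mul]
    _ ≤ Real.exp (w ⬝ᵥ w / 2) := expect_exp_signs_dotProduct_le w
    _ ≤ Real.exp (8 * t ^ 2 * Fintype.card ι) := Real.exp_le_exp.2 (by linarith)

lemma expect_exp_mul_chaos_le (ha : ∀ z, (a *ᵥ z) ⬝ᵥ (a *ᵥ z) ≤ z ⬝ᵥ z) (t : ℝ) :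
    𝔼 b, Real.exp (t * chaos a b) ≤ Real.exp (8 * t ^ 2 * Fintype.card ι) :=
  calc 𝔼 b, Real.exp (t * chaos a b)
      ≤ 𝔼 b, 𝔼 γ, Real.exp (t * decoupledChaos a γ b) := expect_le_expect fun b _ => by
        rw [← expect_decoupledChaos, mul_expect]
        exact Real.exp_expect_le _
    _ = 𝔼 γ, 𝔼 b, Real.exp (t * decoupledChaos a γ b) := expect_comm _ _ _
    _ ≤ Real.exp (8 * t ^ 2 * Fintype.card ι) :=
        expect_le univ_nonempty fun γ _ => expect_exp_mul_decoupledChaos_le ha t γ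

lemma card_chaos_ge_div_le (ha : ∀ z, (a *ᵥ z) ⬝ᵥ (a *ᵥ z) ≤ z ⬝ᵥ z) {ε : ℝ} (hε : 0 ≤ ε) :
    (#{b | ε * Fintype.card ι ≤ chaos a b} : ℝ) / 2 ^ Fintype.card ι ≤
      Real.exp (-(ε ^ 2 * Fintype.card ι / 32)) := by
  have hcard : (Fintype.card (ι → Bool) : ℝ) = 2 ^ Fintype.card ι := by simp
  calc (#{b | ε * Fintype.card ι ≤ chaos a b} : ℝ) / 2 ^ Fintype.card ι
      ≤ Real.exp (-(ε / 16 * (ε * Fintype.card ι))) * 𝔼 b, Real.exp (ε / 16 * chaos a b) := by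
        rw [← hcard]
        exact card_filter_le_div_card_le_exp_mul_expect _ (by positivity) _
    _ ≤ Real.exp (-(ε / 16 * (ε * Fintype.card ι))) *
          Real.exp (8 * (ε / 16) ^ 2 * Fintype.card ι) := by
        gcongr
        exact expect_exp_mul_chaos_le ha _
    _ = Real.exp (-(ε ^ 2 * Fintype.card ι / 32)) := by
        rw [← Real.exp_add]
        ring_nf

lemma card_abs_chaos_ge_div_le (ha : ∀ z, (a *ᵥ z) ⬝ᵥ (a *ᵥ z) ≤ z ⬝ᵥ z) {ε : ℝ} (hε : 0 ≤ ε) :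
    (#{b | ε * Fintype.card ι ≤ |chaos a b|} : ℝ) / 2 ^ Fintype.card ι ≤
      2 * Real.exp (-(ε ^ 2 * Fintype.card ι / 32)) := by
  have hneg : ∀ z, (-a *ᵥ z) ⬝ᵥ (-a *ᵥ z) ≤ z ⬝ᵥ z := fun z => by
    simpa [neg_mulVec] using ha z
  have hsplit : #{b | ε * Fintype.card ι ≤ |chaos a b|} ≤
      #{b | ε * Fintype.card ι ≤ chaos a b} + #{b | ε * Fintype.card ι ≤ chaos (-a) b} := by
    refine (card_le_card fun b hb => ?_).trans (card_union_le _ _)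
    simp only [mem_filter, mem_univ, true_and, mem_union, chaos_neg] at hb ⊢
    exact le_abs.mp hb
  calc (#{b | ε * Fintype.card ι ≤ |chaos a b|} : ℝ) / 2 ^ Fintype.card ι
      ≤ (#{b | ε * Fintype.card ι ≤ chaos a b} : ℝ) / 2 ^ Fintype.card ι +
          (#{b | ε * Fintype.card ι ≤ chaos (-a) b} : ℝ) / 2 ^ Fintype.card ι := by
        rw [← add_div]
        gcongr
        exact_mod_cast hsplit
    _ ≤ 2 * Real.exp (-(ε ^ 2 * Fintype.card ι / 32)) := by
        rw [two_mul]
        exact add_le_add (card_chaos_ge_div_le ha hε) (card_chaos_ge_div_le hneg hε)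

end Chaos

section RealPart

variable {n : Type*} [Fintype n]

open scoped MatrixOrder in
lemma Matrix.PosSemidef.mulVec_dotProduct_mulVec_le [DecidableEq n] {A : Matrix n n ℝ}
    (hA : A.PosSemidef) (hA1 : (1 - A).PosSemidef) (z : n → ℝ) :
    (A *ᵥ z) ⬝ᵥ (A *ᵥ z) ≤ z ⬝ᵥ z := by
  obtain ⟨S, hS, hSS⟩ : ∃ S : Matrix n n ℝ, Sᴴ = S ∧ S * S = A :=
    ⟨CFC.sqrt A, (CFC.sqrt_nonneg A).posSemidef.1, CFC.sqrt_mul_sqrt_self A hA.nonneg⟩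
  have hAA : (A - A * A).PosSemidef := by
    have h := hA1.conjTranspose_mul_mul_same S
    rwa [hS, show S * (1 - A) * S = A - A * A by rw [← hSS]; noncomm_ring] at h
  have hsq : (A *ᵥ z) ⬝ᵥ (A *ᵥ z) = z ⬝ᵥ ((A * A) *ᵥ z) := by
    have hAt : A.IsSymm := by simpa using hA.isHermitian
    rw [← mulVec_mulVec, dotProduct_mulVec, ← mulVec_transpose, hAt.eq, dotProduct_comm]
  have h1 := hAA.dotProduct_mulVec_nonneg z
  have h2 := hA1.dotProduct_mulVec_nonneg z
  simp only [star_trivial, sub_mulVec, one_mulVec, dotProduct_sub] at h1 h2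
  linarith

lemma Matrix.PosSemidef.map_re {A : Matrix n n ℂ} (hA : A.PosSemidef) :
    (A.map Complex.re).PosSemidef := by
  refine .of_dotProduct_mulVec_nonneg ?_ fun x => ?_
  · ext i j
    simpa using congrArg Complex.re (hA.isHermitian.apply i j)
  · refine (hA.re_dotProduct_nonneg fun i => (x i : ℂ)).trans_eq ?_
    simp only [dotProduct, mulVec, Complex.re_sum, mul_sum, star_trivial, map_apply,
      Pi.star_apply, RCLike.re_to_complex]
    refine sum_congr rfl fun i _ => sum_congr rfl fun j _ => ?_
    simp [Complex.mul_re]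

lemma chaos_map_re (A : Matrix n n ℂ) (b : n → Bool) :
    chaos (A.map Complex.re) b =
      (∑ i, ∑ j, (if b i then (1 : ℂ) else -1) * (if b j then (1 : ℂ) else -1) * A i j).re -
        A.trace.re := by
  simp only [chaos, dotProduct, mulVec, trace, Matrix.diag, map_apply, Complex.re_sum, mul_sum]
  refine congrArg (· - _) (sum_congr rfl fun i _ => sum_congr rfl fun j _ => ?_)
  cases hi : b i <;> cases hj : b j <;> simp [signs, hi, hj]

end RealPart

/-- **Concentration of quadratic forms over random signs** (core of the existence of
pseudorandom pure states). There is a constant `c > 0` such that for every `N×N` BPOVM `Π`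
and every `ε > 0`, a uniformly random sign vector `α ∈ {−1,1}^N` (encoded by
`b : Fin N → Bool`, with `α_i = ±1`) satisfies
`Pr[ |(1/N)·Re(Σ_{i,j} α_i α_j Π_{i,j}) − (1/N)·Re tr Π| ≥ ε ] ≤ 2·exp(−c·ε²·N)`. -/
theorem random_sign_quadratic_concentration :
    ∃ c : ℝ, 0 < c ∧
      ∀ N : ℕ, 1 ≤ N →
      ∀ Pm : Matrix (Fin N) (Fin N) ℂ,
        Pm.PosSemidef → ((1 : Matrix (Fin N) (Fin N) ℂ) - Pm).PosSemidef →
      ∀ ε : ℝ, 0 < ε →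
        ((Finset.univ.filter (fun b : Fin N → Bool =>
            ε ≤ |(N : ℝ)⁻¹ *
                  (∑ i, ∑ j, (if b i then (1 : ℂ) else -1) * (if b j then (1 : ℂ) else -1) *
                    Pm i j).re -
                (N : ℝ)⁻¹ * (Pm.trace).re|)).card : ℝ) / 2 ^ N ≤
          2 * Real.exp (-c * ε ^ 2 * N) := by
  refine ⟨1 / 32, by norm_num, fun N hN Pm hP hP1 ε hε => ?_⟩
  have hB : ∀ z, (Pm.map Complex.re *ᵥ z) ⬝ᵥ (Pm.map Complex.re *ᵥ z) ≤ z ⬝ᵥ z :=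
    hP.map_re.mulVec_dotProduct_mulVec_le <| by
      simpa [Matrix.map_sub, Matrix.map_one] using hP1.map_re
  have hNpos : (0 : ℝ) < N := by exact_mod_cast hN
  have htail := card_abs_chaos_ge_div_le hB hε.le
  rw [Fintype.card_fin] at htail
  calc _ = (#{b | ε * N ≤ |chaos (Pm.map Complex.re) b|} : ℝ) / 2 ^ N := by
        congr 3
        ext b
        simp only [mem_filter, mem_univ, true_and]
        rw [← mul_sub, ← chaos_map_re, abs_mul, abs_inv, Nat.abs_cast, inv_mul_eq_div,
          le_div_iff₀ hNpos]
    _ ≤ 2 * Real.exp (-(1 / 32) * ε ^ 2 * N) := by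
        rwa [show -(1 / 32) * ε ^ 2 * N = -(ε ^ 2 * N / 32) by ring]
end

section
/- Conditional quantum min-entropy matches classical average min-entropy for classical states: Let N, M ≥ 1 and let p : Fin N × Fin M → ℝ be nonnegative with Σ_{x,b} p(x,b) = 1. Let ρ = Matrix.diagonal (fun (x,b) => (p(x,b) : ℂ)) be the corresponding density matrix on ℂ^{N·M} indexed by Fin N × Fin M. Then sInf { c : ℝ | 0 < c ∧ ∃ density matrix σ on ℂ^M, ρ ≤ c • ((N:ℝ)⁻¹ • (I_N ⊗ σ)) in the Loewner order } = N · Σ_{b : Fin M} (max_{x : Fin N} p(x,b)). (Equivalently, H_min(X|B)_ρ as defined by log N minus the infimum of D_∞(ρ ‖ (1/N)·I_N ⊗ σ) over densities σ equals −log₂ Σ_b max_x p(x,b), the classical average min-entropy of DORS.) -/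
open Matrix
open scoped ComplexOrder Kronecker

/-!
The diagonal entry at `(x, b)` of `c • (r • (1 ⊗ σ)) - diag p` is `c r σ_bb - p(x, b)`, so
positivity forces `c r σ_bb ≥ max_x p(x, b)`; summing over `b` and using `tr σ = 1` gives
`c ≥ r⁻¹ Σ_b max_x p(x, b)`. Conversely the diagonal `σ` with `σ_bb ∝ max_x p(x, b)` attains
this value, and then the difference is diagonal with nonnegative entries.
-/

variable {ι κ : Type*}

section DiagonalKronecker

variable [DecidableEq ι] [DecidableEq κ]

theorem smul_one_kronecker_diagonal_sub_diagonal (c r : ℝ) (s : κ → ℝ) (p : ι × κ → ℝ) :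
    c • (r • ((1 : Matrix ι ι ℂ) ⊗ₖ diagonal (fun b => (s b : ℂ)))) -
        diagonal (fun x => (p x : ℂ)) =
      diagonal (fun x => ((c * r * s x.2 - p x : ℝ) : ℂ)) := by
  rw [← diagonal_one, diagonal_kronecker_diagonal, ← diagonal_smul, ← diagonal_smul,
    diagonal_sub]
  congr 1
  funext x
  simp only [Pi.smul_apply, one_mul, Complex.real_smul]
  push_cast
  ring

theorem le_of_posSemidef_smul_one_kronecker_sub_diagonal {c r : ℝ} {σ : Matrix κ κ ℂ}
    {p : ι × κ → ℝ}
    (h : (c • (r • ((1 : Matrix ι ι ℂ) ⊗ₖ σ)) - diagonal (fun x => (p x : ℂ))).PosSemidef)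
    (x : ι) (b : κ) : p (x, b) ≤ c * r * (σ b b).re := by
  have hxb := (Complex.le_def.mp (h.diag_nonneg (i := (x, b)))).1
  simpa [kroneckerMap_apply, smul_smul] using hxb

end DiagonalKronecker

theorem sum_re_diag_eq_one [Fintype κ] {σ : Matrix κ κ ℂ} (htr : σ.trace = 1) :
    ∑ b, (σ b b).re = 1 := by
  simpa [trace, Complex.re_sum] using congrArg Complex.re htr

theorem exists_pos_of_sum_eq_one [Fintype ι] {p : ι → ℝ} (hsum : ∑ i, p i = 1) :
    ∃ i, 0 < p i := by
  obtain ⟨i, -, hi⟩ := Finset.exists_lt_of_sum_lt (s := Finset.univ) (f := 0) (g := p)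
    (by simp [hsum])
  exact ⟨i, hi⟩

theorem sum_iSup_pos [Fintype ι] [Fintype κ] {p : ι × κ → ℝ} (hp : ∀ x, 0 ≤ p x)
    (hsum : ∑ x, p x = 1) : 0 < ∑ b, ⨆ x, p (x, b) := by
  obtain ⟨⟨x₀, b₀⟩, hpos⟩ := exists_pos_of_sum_eq_one hsum
  refine Finset.sum_pos' (fun b _ => Real.iSup_nonneg fun x => hp (x, b))
    ⟨b₀, Finset.mem_univ _, ?_⟩
  exact hpos.trans_le (Finite.le_ciSup (fun x => p (x, b₀)) x₀)

theorem sum_iSup_le_of_posSemidef_smul_one_kronecker_sub_diagonal [Fintype κ] [DecidableEq ι]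
    [DecidableEq κ] [Nonempty ι] {c r : ℝ} {σ : Matrix κ κ ℂ} {p : ι × κ → ℝ} (htr : σ.trace = 1)
    (h : (c • (r • ((1 : Matrix ι ι ℂ) ⊗ₖ σ)) - diagonal (fun x => (p x : ℂ))).PosSemidef) :
    ∑ b, ⨆ x, p (x, b) ≤ c * r :=
  calc ∑ b, ⨆ x, p (x, b)
      ≤ ∑ b, c * r * (σ b b).re := Finset.sum_le_sum fun b _ =>
        ciSup_le fun x => le_of_posSemidef_smul_one_kronecker_sub_diagonal h x b
    _ = c * r := by rw [← Finset.mul_sum, sum_re_diag_eq_one htr, mul_one]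

section Feasible

variable [Fintype ι] [Fintype κ] [DecidableEq ι] [DecidableEq κ]

theorem exists_density_posSemidef_smul_one_kronecker_sub_diagonal {r : ℝ} (hr : 0 < r)
    {p : ι × κ → ℝ} (hp : ∀ x, 0 ≤ p x) (hsum : ∑ x, p x = 1) :
    ∃ σ : Matrix κ κ ℂ, σ.PosSemidef ∧ σ.trace = 1 ∧
      ((r⁻¹ * ∑ b, ⨆ x, p (x, b)) • (r • ((1 : Matrix ι ι ℂ) ⊗ₖ σ)) -
        diagonal (fun x => (p x : ℂ))).PosSemidef := by
  set S := ∑ b, ⨆ x, p (x, b)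
  have hS : 0 < S := sum_iSup_pos hp hsum
  refine ⟨diagonal fun b => (((⨆ x, p (x, b)) / S : ℝ) : ℂ),
    posSemidef_diagonal_iff.mpr fun b => Complex.zero_le_real.mpr ?_, ?_, ?_⟩
  · exact div_nonneg (Real.iSup_nonneg fun x => hp (x, b)) hS.le
  · rw [trace_diagonal, ← Complex.ofReal_sum, ← Finset.sum_div, div_self hS.ne']
    simp
  · rw [smul_one_kronecker_diagonal_sub_diagonal]
    refine posSemidef_diagonal_iff.mpr fun x => Complex.zero_le_real.mpr ?_
    have hcol : r⁻¹ * S * r * ((⨆ x', p (x', x.2)) / S) = ⨆ x', p (x', x.2) := by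
      field_simp
    rw [hcol, sub_nonneg]
    exact Finite.le_ciSup (fun x' => p (x', x.2)) x.1

theorem sInf_smul_one_kronecker_sub_diagonal_posSemidef {r : ℝ} (hr : 0 < r)
    (p : ι × κ → ℝ) (hp : ∀ x, 0 ≤ p x) (hsum : ∑ x, p x = 1) :
    sInf {c : ℝ | 0 < c ∧ ∃ σ : Matrix κ κ ℂ, σ.PosSemidef ∧ σ.trace = 1 ∧
        (c • (r • ((1 : Matrix ι ι ℂ) ⊗ₖ σ)) - diagonal (fun x => (p x : ℂ))).PosSemidef} =
      r⁻¹ * ∑ b, ⨆ x, p (x, b) := by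
  have hmem : r⁻¹ * ∑ b, ⨆ x, p (x, b) ∈ {c : ℝ | 0 < c ∧ ∃ σ : Matrix κ κ ℂ,
      σ.PosSemidef ∧ σ.trace = 1 ∧
        (c • (r • ((1 : Matrix ι ι ℂ) ⊗ₖ σ)) - diagonal (fun x => (p x : ℂ))).PosSemidef} :=
    ⟨mul_pos (inv_pos.mpr hr) (sum_iSup_pos hp hsum),
      exists_density_posSemidef_smul_one_kronecker_sub_diagonal hr hp hsum⟩
  obtain ⟨⟨x₀, -⟩, -⟩ := exists_pos_of_sum_eq_one hsum
  have : Nonempty ι := ⟨x₀⟩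
  refine le_antisymm (csInf_le ⟨0, fun c hc => hc.1.le⟩ hmem) (le_csInf ⟨_, hmem⟩ ?_)
  rintro c ⟨-, σ, -, htr, h⟩
  rw [inv_mul_le_iff₀ hr, mul_comm]
  exact sum_iSup_le_of_posSemidef_smul_one_kronecker_sub_diagonal htr h

end Feasible

theorem conditional_min_entropy_classical_general (N M : ℕ) (hN : 1 ≤ N)
    (p : Fin N × Fin M → ℝ) (hpnn : ∀ x, 0 ≤ p x) (hpsum : ∑ x, p x = 1) :
    sInf {c : ℝ | 0 < c ∧
        ∃ σ : Matrix (Fin M) (Fin M) ℂ, σ.PosSemidef ∧ σ.trace = 1 ∧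
          (c • ((N : ℝ)⁻¹ • ((1 : Matrix (Fin N) (Fin N) ℂ) ⊗ₖ σ)) -
            Matrix.diagonal (fun x : Fin N × Fin M => (p x : ℂ))).PosSemidef} =
      N * ∑ b : Fin M, ⨆ x : Fin N, p (x, b) := by
  have hN' : (0 : ℝ) < (N : ℝ)⁻¹ := inv_pos.mpr (Nat.cast_pos.mpr hN)
  rw [sInf_smul_one_kronecker_sub_diagonal_posSemidef hN' p hpnn hpsum, inv_inv]

/-- **Conditional quantum min-entropy matches classical average min-entropy for classical
states.** For a joint probability vector `p` on `Fin N × Fin M` with associated diagonal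
density matrix `ρ`, the quantity `2^{log N − H_min(X|B)_ρ}`, i.e. the infimum of those
`c > 0` for which some density `σ` on the `B` system satisfies
`ρ ≤ c • ((1/N)·I_N ⊗ σ)`, equals `N · Σ_b max_x p(x,b)`; equivalently `H_min(X|B)_ρ`
equals the classical average min-entropy `−log₂ Σ_b max_x p(x,b)`. -/
theorem conditional_min_entropy_classical (N M : ℕ) (hN : 1 ≤ N) (hM : 1 ≤ M)
    (p : Fin N × Fin M → ℝ) (hpnn : ∀ x, 0 ≤ p x) (hpsum : ∑ x, p x = 1) :
    sInf {c : ℝ | 0 < c ∧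
        ∃ σ : Matrix (Fin M) (Fin M) ℂ, σ.PosSemidef ∧ σ.trace = 1 ∧
          (c • ((N : ℝ)⁻¹ • ((1 : Matrix (Fin N) (Fin N) ℂ) ⊗ₖ σ)) -
            Matrix.diagonal (fun x : Fin N × Fin M => (p x : ℂ))).PosSemidef} =
      N * ∑ b : Fin M, ⨆ x : Fin N, p (x, b) :=
  conditional_min_entropy_classical_general N M hN p hpnn hpsum
end

section
/- Derandomization via sampling for matrix-valued function ensembles: There is a universal constant C > 0 such that the following holds. Let X be a finite nonempty type with |X| = d_X ≥ 2, let d ≥ 2, let ι be a finite nonempty type, let w : ι → ℝ be nonnegative weights with Σ_k w_k = 1, let F : ι → X → (density matrices on ℂ^d), and let ε ∈ (0, 1/2). Then there exist a natural number t with 1 ≤ t ≤ ⌈C · (Real.log d_X + d² · Real.log (1/ε)) / ε²⌉ and indices i : Fin t → ι such that for every x ∈ X and every d×d complex matrix Π with Π and I − Π positive semidefinite: |Re tr(Π · (Σ_k w_k • F_k(x) − (1/t) • Σ_{j : Fin t} F_{i(j)}(x)))| ≤ ε. -/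
/-!
Fix an `ε / 4`-net `T` of the unit ball of `d × d` matrices in the operator norm; a volume
argument gives `|T| ≤ (1 + 8 / ε) ^ (2 d²)`. For an input `x` and a net point `A` the pairings
`Re tr (A F_k(x))` lie in `[-1, 1]`, so by Hoeffding's inequality the mean over `t` i.i.d. samples
from `w` is `ε / 2`-close to the `w`-mean except with probability `2 exp (-t ε² / 64)`. Once
`t ≳ (log d_X + d² log (1/ε)) / ε²`, a union bound over the `d_X |T|` pairs `(x, A)` leaves a good
sample. A BPOVM has operator norm at most one, so it is `ε / 4`-close to some `A ∈ T`; since both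
averages are density matrices, pairing with them is `1`-Lipschitz in the operator norm, which
costs the remaining `2 · ε / 4`.
-/

open Matrix
open scoped ComplexOrder

open Finset Real Metric MeasureTheory Module
open scoped NNReal ENNReal Matrix.Norms.L2Operator MatrixOrder InnerProductSpace

section Sampling

variable {ι : Type*} [Fintype ι]

theorem sum_mul_exp_le_exp_sq {w h : ι → ℝ} (hw : ∀ k, 0 ≤ w k) (hw1 : ∑ k, w k = 1)
    (hmean : ∑ k, w k * h k = 0) (hh : ∀ k, |h k| ≤ 1) {c : ℝ} (hc : |c| ≤ 1) :
    ∑ k, w k * exp (c * h k) ≤ exp (c ^ 2) := by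
  have hexp (k : ι) : exp (c * h k) ≤ 1 + c * h k + c ^ 2 := by
    have hch : |c * h k| ≤ 1 := by
      rw [abs_mul]; exact mul_le_one₀ hc (abs_nonneg _) (hh k)
    have hsq : (c * h k) ^ 2 ≤ c ^ 2 := by
      rw [mul_pow]
      exact mul_le_of_le_one_right (sq_nonneg c) ((sq_le_one_iff_abs_le_one _).mpr (hh k))
    linarith [(abs_le.mp (abs_exp_sub_one_sub_id_le hch)).2]
  calc ∑ k, w k * exp (c * h k) ≤ ∑ k, w k * (1 + c * h k + c ^ 2) :=
        sum_le_sum fun k _ => mul_le_mul_of_nonneg_left (hexp k) (hw k)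
    _ = (1 + c ^ 2) * ∑ k, w k + c * ∑ k, w k * h k := by
        simp only [mul_sum]; rw [← sum_add_distrib]; exact sum_congr rfl fun k _ => by ring
    _ = c ^ 2 + 1 := by rw [hw1, hmean]; ring
    _ ≤ exp (c ^ 2) := add_one_le_exp _

theorem sum_prod_apply_eq_pow (g : ι → ℝ) (t : ℕ) :
    ∑ f : Fin t → ι, ∏ j, g (f j) = (∑ k, g k) ^ t := by
  classical
  rw [← Fin.prod_const, Fintype.prod_sum]

theorem sum_prod_mul_exp_sum_eq_pow (w h : ι → ℝ) (c : ℝ) (t : ℕ) :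
    ∑ f : Fin t → ι, (∏ j, w (f j)) * exp (c * ∑ j, h (f j)) =
      (∑ k, w k * exp (c * h k)) ^ t := by
  rw [← sum_prod_apply_eq_pow]
  refine sum_congr rfl fun f _ => ?_
  rw [mul_sum, exp_sum, prod_mul_distrib]

/-- Hoeffding's inequality: `∏ j, w (f j)` is the law of `t` independent samples from `w`. -/
theorem sum_prod_filter_le_two_mul_exp {w h : ι → ℝ} (hw : ∀ k, 0 ≤ w k)
    (hw1 : ∑ k, w k = 1) (hmean : ∑ k, w k * h k = 0) (hh : ∀ k, |h k| ≤ 1) (t : ℕ) {s : ℝ}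
    (hs0 : 0 ≤ s) (hs2 : s ≤ 2) :
    ∑ f : Fin t → ι with t * s ≤ |∑ j, h (f j)|, ∏ j, w (f j) ≤ 2 * exp (-(t * s ^ 2 / 4)) := by
  set c := s / 2 with hc_def
  have hc0 : 0 ≤ c := by positivity
  have hc : |c| ≤ 1 := by rw [abs_of_nonneg hc0]; linarith
  have hneg : ∑ k, w k * (-h k) = 0 := by simp [hmean]
  -- Markov's inequality for `exp (c S) + exp (-c S)`, where `S` is the sum of the samples
  have hmarkov (f : Fin t → ι) (hf : t * s ≤ |∑ j, h (f j)|) :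
      1 ≤ exp (c * ∑ j, h (f j) - c * (t * s)) + exp (c * ∑ j, -h (f j) - c * (t * s)) := by
    rw [sum_neg_distrib]
    rcases le_abs'.mp hf with hf | hf
    · have : 0 ≤ c * -∑ j, h (f j) - c * (t * s) := by nlinarith
      linarith [one_le_exp this, exp_pos (c * ∑ j, h (f j) - c * (t * s))]
    · have : 0 ≤ c * ∑ j, h (f j) - c * (t * s) := by nlinarith
      linarith [one_le_exp this, exp_pos (c * -∑ j, h (f j) - c * (t * s))]
  have hW (f : Fin t → ι) : 0 ≤ ∏ j, w (f j) := prod_nonneg fun j _ => hw (f j)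
  calc ∑ f : Fin t → ι with t * s ≤ |∑ j, h (f j)|, ∏ j, w (f j)
      ≤ ∑ f : Fin t → ι with t * s ≤ |∑ j, h (f j)|, (∏ j, w (f j)) *
          (exp (c * ∑ j, h (f j) - c * (t * s)) + exp (c * ∑ j, -h (f j) - c * (t * s))) :=
        sum_le_sum fun f hf => le_mul_of_one_le_right (hW f) (hmarkov f (mem_filter.mp hf).2)
    _ ≤ ∑ f : Fin t → ι, (∏ j, w (f j)) *
          (exp (c * ∑ j, h (f j) - c * (t * s)) + exp (c * ∑ j, -h (f j) - c * (t * s))) :=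
        sum_le_sum_of_subset_of_nonneg (filter_subset _ _) fun f _ _ =>
          mul_nonneg (hW f) (by positivity)
    _ = exp (-(c * (t * s))) * ((∑ k, w k * exp (c * h k)) ^ t +
          (∑ k, w k * exp (c * -h k)) ^ t) := by
        rw [← sum_prod_mul_exp_sum_eq_pow, ← sum_prod_mul_exp_sum_eq_pow, ← sum_add_distrib,
          mul_sum]
        refine sum_congr rfl fun f _ => ?_
        simp only [sub_eq_add_neg, exp_add]; ring
    _ ≤ exp (-(c * (t * s))) * (exp (c ^ 2) ^ t + exp (c ^ 2) ^ t) := by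
        gcongr
        · exact sum_nonneg fun k _ => mul_nonneg (hw k) (exp_pos _).le
        · exact sum_mul_exp_le_exp_sq hw hw1 hmean hh hc
        · exact sum_nonneg fun k _ => mul_nonneg (hw k) (exp_pos _).le
        · exact sum_mul_exp_le_exp_sq hw hw1 hneg (fun k => by simpa using hh k) hc
    _ = 2 * exp (-(t * s ^ 2 / 4)) := by
        rw [← exp_nat_mul, ← two_mul, mul_left_comm, ← exp_add]
        congr 2; ring

theorem exists_forall_not_of_card_mul_lt_one {Ω E : Type*} [Fintype Ω] {W : Ω → ℝ}
    (hW : ∀ ω, 0 ≤ W ω) (hW1 : ∑ ω, W ω = 1) {s : Finset E} {P : E → Ω → Prop}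
    [∀ e, DecidablePred (P e)] {p : ℝ} (hp : ∀ e ∈ s, ∑ ω with P e ω, W ω ≤ p)
    (hsp : #s * p < 1) : ∃ ω, ∀ e ∈ s, ¬ P e ω := by
  by_contra! hcover
  have hle (ω : Ω) : W ω ≤ ∑ e ∈ s, if P e ω then W ω else 0 := by
    obtain ⟨e, he, hPe⟩ := hcover ω
    calc W ω = if P e ω then W ω else 0 := (if_pos hPe).symm
      _ ≤ ∑ e ∈ s, if P e ω then W ω else 0 :=
        single_le_sum (f := fun e => if P e ω then W ω else 0)
          (fun e _ => by split_ifs <;> simp [hW ω]) he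
  have : (1 : ℝ) ≤ #s * p := calc
    (1 : ℝ) = ∑ ω, W ω := hW1.symm
    _ ≤ ∑ ω, ∑ e ∈ s, if P e ω then W ω else 0 := sum_le_sum fun ω _ => hle ω
    _ = ∑ e ∈ s, ∑ ω with P e ω, W ω := by rw [sum_comm]; simp only [sum_filter]
    _ ≤ ∑ _e ∈ s, p := sum_le_sum hp
    _ = #s * p := by rw [sum_const, nsmul_eq_mul]
  linarith

theorem exists_sample_forall_abs_sub_lt {E : Type*} {w : ι → ℝ} (hw : ∀ k, 0 ≤ w k)
    (hw1 : ∑ k, w k = 1) {s : Finset E} {g : E → ι → ℝ} (hg : ∀ e ∈ s, ∀ k, |g e k| ≤ 1)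
    {t : ℕ} (ht : 0 < t) {δ : ℝ} (hδ0 : 0 ≤ δ) (hδ4 : δ ≤ 4)
    (hcard : #s * (2 * exp (-(t * δ ^ 2 / 16))) < 1) :
    ∃ i : Fin t → ι, ∀ e ∈ s, |∑ k, w k * g e k - (t : ℝ)⁻¹ * ∑ j, g e (i j)| < δ := by
  classical
  set μ : E → ℝ := fun e => ∑ k, w k * g e k
  set h : E → ι → ℝ := fun e k => (g e k - μ e) / 2
  have hμ (e) (he : e ∈ s) : |μ e| ≤ 1 := calc
    |μ e| ≤ ∑ k, |w k * g e k| := abs_sum_le_sum_abs _ _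
    _ ≤ ∑ k, w k := sum_le_sum fun k _ => by
        rw [abs_mul, abs_of_nonneg (hw k)]; exact mul_le_of_le_one_right (hw k) (hg e he k)
    _ = 1 := hw1
  have hmean (e : E) : ∑ k, w k * h e k = 0 := by
    simp only [h, mul_div_assoc', ← sum_div, mul_sub, sum_sub_distrib, ← sum_mul, hw1]
    simp [μ]
  have hh (e) (he : e ∈ s) (k : ι) : |h e k| ≤ 1 := by
    have := abs_sub (g e k) (μ e)
    rw [abs_div, abs_two, div_le_one two_pos]
    linarith [hg e he k, hμ e he]
  obtain ⟨i, hi⟩ := exists_forall_not_of_card_mul_lt_one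
    (W := fun f : Fin t → ι => ∏ j, w (f j)) (fun f => prod_nonneg fun j _ => hw (f j))
    (by rw [sum_prod_apply_eq_pow, hw1, one_pow])
    (P := fun e f => t * (δ / 2) ≤ |∑ j, h e (f j)|)
    (fun e he => (sum_prod_filter_le_two_mul_exp hw hw1 (hmean e) (hh e he) t (by positivity)
      (by linarith)).trans_eq (by ring_nf)) hcard
  refine ⟨i, fun e he => ?_⟩
  have htR : (0 : ℝ) < t := by exact_mod_cast ht
  have hsum : ∑ j, h e (i j) = (∑ j, g e (i j) - t * μ e) / 2 := by
    simp only [h, ← sum_div, sum_sub_distrib, sum_const, card_univ, Fintype.card_fin,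
      nsmul_eq_mul]
  have := not_le.mp (hi e he)
  rw [hsum, abs_div, abs_two] at this
  have hdev : μ e - (t : ℝ)⁻¹ * ∑ j, g e (i j) = -((t : ℝ)⁻¹ * (∑ j, g e (i j) - t * μ e)) := by
    field_simp; ring
  rw [hdev, abs_neg, abs_mul, abs_of_pos (inv_pos.mpr htR), inv_mul_lt_iff₀ htR]
  linarith

end Sampling

section Net

variable {E : Type*} [NormedAddCommGroup E] [NormedSpace ℝ E] [FiniteDimensional ℝ E]
  [Nontrivial E]

/-- The volume argument: the balls of radius `δ / 2` around the points are disjoint and lie in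
the ball of radius `1 + δ / 2`. -/
theorem Metric.IsSeparated.card_le_of_subset_closedBall {δ : ℝ≥0} (hδ : 0 < δ) {s : Finset E}
    (hs : (s : Set E) ⊆ closedBall 0 1) (hsep : IsSeparated δ (s : Set E)) :
    (#s : ℝ) ≤ (1 + 2 / δ) ^ finrank ℝ E := by
  borelize E
  set μ : Measure E := (finBasis ℝ E).addHaar
  set r : ℝ := δ / 2
  have hr : 0 < r := by positivity
  have hdisj : (s : Set E).PairwiseDisjoint fun x => ball x r := by
    intro x hx y hy hxy
    refine ball_disjoint_ball ?_
    have : (δ : ℝ≥0∞) < edist x y := hsep hx hy hxy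
    rw [edist_nndist, ENNReal.coe_lt_coe, ← NNReal.coe_lt_coe, coe_nndist] at this
    simp only [r]; linarith
  have hsub : (⋃ x ∈ s, ball x r) ⊆ ball 0 (1 + r) := by
    simp only [Set.iUnion_subset_iff]
    intro x hx
    exact ball_subset_ball' (by linarith [mem_closedBall_zero_iff.mp (hs hx), dist_zero_right x])
  have hvol : (#s : ℝ≥0∞) * ENNReal.ofReal (r ^ finrank ℝ E) * μ (ball 0 1) ≤
      ENNReal.ofReal ((1 + r) ^ finrank ℝ E) * μ (ball 0 1) := calc
    _ = ∑ x ∈ s, μ (ball x r) := by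
        simp only [Measure.addHaar_ball μ _ hr.le, sum_const, nsmul_eq_mul, mul_assoc]
    _ = μ (⋃ x ∈ s, ball x r) :=
        (measure_biUnion_finset hdisj fun _ _ => measurableSet_ball).symm
    _ ≤ μ (ball 0 (1 + r)) := measure_mono hsub
    _ = _ := Measure.addHaar_ball μ 0 (by positivity)
  rw [ENNReal.mul_le_mul_iff_left (measure_ball_pos μ 0 one_pos).ne' measure_ball_lt_top.ne,
    ← ENNReal.ofReal_natCast, ← ENNReal.ofReal_mul (by positivity),
    ENNReal.ofReal_le_ofReal_iff (by positivity)] at hvol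
  calc (#s : ℝ) = #s * r ^ finrank ℝ E / r ^ finrank ℝ E := by field_simp
    _ ≤ (1 + r) ^ finrank ℝ E / r ^ finrank ℝ E := by gcongr
    _ = (1 + 2 / δ) ^ finrank ℝ E := by rw [← div_pow]; congr 1; field_simp; simp only [r]; ring

theorem Metric.packingNumber_closedBall_ne_top {δ : ℝ≥0} (hδ : 0 < δ) :
    packingNumber δ (closedBall (0 : E) 1) ≠ ⊤ := by
  set N := ⌊(1 + 2 / (δ : ℝ)) ^ finrank ℝ E⌋₊
  refine ne_top_of_le_ne_top (ENat.natCast_ne_top N)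
    (iSup_le fun C => iSup_le fun hC => iSup_le fun hsep => ?_)
  by_contra! hN
  obtain ⟨C', hC'C, hC'⟩ := Set.exists_subset_encard_eq (Order.add_one_le_of_lt hN)
  lift C' to Finset E using Set.finite_of_encard_eq_coe (k := N + 1) (by simpa using hC')
  have hcard : (#C' : ℝ) ≤ (1 + 2 / δ) ^ finrank ℝ E :=
    (hsep.subset hC'C).card_le_of_subset_closedBall hδ (hC'C.trans hC)
  have hC'card : #C' = N + 1 := by
    exact_mod_cast (Set.encard_coe_eq_coe_finsetCard C').symm.trans hC'
  have hN := Nat.lt_floor_add_one ((1 + 2 / (δ : ℝ)) ^ finrank ℝ E)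
  rw [hC'card, Nat.cast_add_one] at hcard
  linarith

theorem Metric.exists_finset_isCover_closedBall {δ : ℝ≥0} (hδ : 0 < δ) :
    ∃ T : Finset E, (T : Set E) ⊆ closedBall 0 1 ∧ IsCover δ (closedBall 0 1) (T : Set E) ∧
      (#T : ℝ) ≤ (1 + 2 / δ) ^ finrank ℝ E := by
  have hpack := packingNumber_closedBall_ne_top (E := E) hδ
  have hfin : (maximalSeparatedSet δ (closedBall (0 : E) 1)).Finite :=
    Set.encard_ne_top_iff.mp (encard_maximalSeparatedSet hpack ▸ hpack)
  refine ⟨hfin.toFinset, ?_, ?_, ?_⟩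
  · simpa using maximalSeparatedSet_subset
  · simpa using isCover_maximalSeparatedSet hpack
  · exact IsSeparated.card_le_of_subset_closedBall hδ (by simpa using maximalSeparatedSet_subset)
      (by simpa using isSeparated_maximalSeparatedSet)

end Net

namespace Matrix

variable {n : Type*} [Fintype n]

def IsDensity (ρ : Matrix n n ℂ) : Prop := ρ.PosSemidef ∧ ρ.trace = 1

theorem isDensity_sum_smul {ι : Type*} {s : Finset ι} {c : ι → ℝ} (hc : ∀ k ∈ s, 0 ≤ c k)
    (hc1 : ∑ k ∈ s, c k = 1) {ρ : ι → Matrix n n ℂ} (hρ : ∀ k ∈ s, (ρ k).IsDensity) :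
    (∑ k ∈ s, c k • ρ k).IsDensity := by
  refine ⟨posSemidef_sum s fun k hk => (hρ k hk).1.smul (hc k hk), ?_⟩
  calc (∑ k ∈ s, c k • ρ k).trace = ∑ k ∈ s, (c k : ℂ) := by
        rw [trace_sum]
        refine sum_congr rfl fun k hk => ?_
        rw [trace_smul, (hρ k hk).2, Complex.real_smul, mul_one]
    _ = 1 := by exact_mod_cast hc1

variable [DecidableEq n]

theorem norm_star_dotProduct_mulVec_le (B : Matrix n n ℂ) (v : n → ℂ) :
    ‖star v ⬝ᵥ (B *ᵥ v)‖ ≤ ‖B‖ * (star v ⬝ᵥ v).re := by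
  have hv : (star v ⬝ᵥ v).re = ‖WithLp.toLp 2 v‖ ^ 2 := by
    rw [← inner_self_eq_norm_sq (𝕜 := ℂ), EuclideanSpace.inner_eq_star_dotProduct,
      dotProduct_comm]
    rfl
  calc ‖star v ⬝ᵥ (B *ᵥ v)‖
      = ‖⟪WithLp.toLp 2 v, (EuclideanSpace.equiv n ℂ).symm (B *ᵥ v)⟫_ℂ‖ := by
        rw [EuclideanSpace.inner_eq_star_dotProduct, dotProduct_comm]; rfl
    _ ≤ ‖WithLp.toLp 2 v‖ * (‖B‖ * ‖WithLp.toLp 2 v‖) :=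
        (norm_inner_le_norm _ _).trans (mul_le_mul_of_nonneg_left (l2_opNorm_mulVec B _)
          (norm_nonneg _))
    _ = ‖B‖ * (star v ⬝ᵥ v).re := by rw [hv]; ring

theorem PosSemidef.norm_trace_mul_le {ρ : Matrix n n ℂ} (hρ : ρ.PosSemidef)
    (B : Matrix n n ℂ) :
    ‖(B * ρ).trace‖ ≤ ‖B‖ * ρ.trace.re := by
  obtain ⟨m, v, rfl⟩ := posSemidef_iff_eq_sum_vecMulVec.mp hρ
  simp only [mul_sum, trace_sum, mul_vecMulVec, trace_vecMulVec, Complex.re_sum]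
  refine (norm_sum_le _ _).trans (sum_le_sum fun i _ => ?_)
  rw [dotProduct_comm, dotProduct_comm (v i)]
  exact norm_star_dotProduct_mulVec_le B (v i)

theorem IsDensity.norm_trace_mul_le {ρ : Matrix n n ℂ} (hρ : ρ.IsDensity) (B : Matrix n n ℂ) :
    ‖(B * ρ).trace‖ ≤ ‖B‖ := by
  simpa [hρ.2] using hρ.1.norm_trace_mul_le B

theorem norm_le_one_of_posSemidef_of_posSemidef_one_sub {P : Matrix n n ℂ} (hP : P.PosSemidef)
    (hP1 : (1 - P).PosSemidef) : ‖P‖ ≤ 1 :=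
  (CStarAlgebra.norm_le_one_iff_of_nonneg P hP.nonneg).mpr (le_iff.mpr hP1)

theorem abs_re_trace_mul_sub_le {ρ σ : Matrix n n ℂ} (hρ : ρ.IsDensity) (hσ : σ.IsDensity)
    (A P : Matrix n n ℂ) :
    |(P * (ρ - σ)).trace.re| ≤ |(A * (ρ - σ)).trace.re| + 2 * ‖P - A‖ := by
  have hsplit : (P * (ρ - σ)).trace.re =
      (A * (ρ - σ)).trace.re + ((P - A) * ρ).trace.re - ((P - A) * σ).trace.re := by
    simp only [mul_sub, sub_mul, trace_sub, Complex.sub_re]; ring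
  have hρ' := (Complex.abs_re_le_norm _).trans (hρ.norm_trace_mul_le (P - A))
  have hσ' := (Complex.abs_re_le_norm _).trans (hσ.norm_trace_mul_le (P - A))
  rw [hsplit]
  linarith [abs_sub ((A * (ρ - σ)).trace.re + ((P - A) * ρ).trace.re) ((P - A) * σ).trace.re,
    abs_add_le (A * (ρ - σ)).trace.re ((P - A) * ρ).trace.re]

end Matrix

theorem exists_sample_forall_abs_re_trace_mul_le {X n ι : Type*} [Fintype X] [Fintype n]
    [DecidableEq n] [Nonempty n] [Fintype ι] {w : ι → ℝ} (hw : ∀ k, 0 ≤ w k) (hw1 : ∑ k, w k = 1)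
    {F : ι → X → Matrix n n ℂ} (hF : ∀ k x, (F k x).IsDensity) {ε : ℝ} (hε : 0 < ε)
    (hε1 : ε ≤ 1) {t : ℕ} (ht : 0 < t)
    (hcard : Fintype.card X * (1 + 8 / ε) ^ (2 * Fintype.card n ^ 2) *
      (2 * exp (-(t * ε ^ 2 / 64))) < 1) :
    ∃ i : Fin t → ι, ∀ x P, P.PosSemidef → (1 - P).PosSemidef →
      |(P * (∑ k, w k • F k x - (t : ℝ)⁻¹ • ∑ j, F (i j) x)).trace.re| ≤ ε := by
  obtain ⟨T, hT1, hTcover, hTcard⟩ := exists_finset_isCover_closedBall (E := Matrix n n ℂ)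
    (Real.toNNReal_pos.mpr (by positivity : 0 < ε / 4))
  have hfinrank : finrank ℝ (Matrix n n ℂ) = 2 * Fintype.card n ^ 2 := by
    rw [finrank_matrix, Complex.finrank_real_complex]; ring
  rw [hfinrank, Real.coe_toNNReal _ (by positivity), div_div_eq_mul_div] at hTcard
  norm_num at hTcard
  have hg : ∀ e ∈ (univ : Finset X) ×ˢ T, ∀ k, |(e.2 * F k e.1).trace.re| ≤ 1 := fun e he k =>
    (Complex.abs_re_le_norm _).trans (((hF k e.1).norm_trace_mul_le e.2).trans
      (mem_closedBall_zero_iff.mp (hT1 (mem_product.mp he).2)))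
  have hcard' : #((univ : Finset X) ×ˢ T) * (2 * exp (-(t * (ε / 2) ^ 2 / 16))) < 1 := by
    refine lt_of_le_of_lt ?_ hcard
    rw [show (t : ℝ) * (ε / 2) ^ 2 / 16 = t * ε ^ 2 / 64 by ring, card_product, card_univ,
      Nat.cast_mul]
    gcongr
  obtain ⟨i, hi⟩ := exists_sample_forall_abs_sub_lt hw hw1 hg ht (δ := ε / 2) (by positivity)
    (by linarith) hcard'
  refine ⟨i, fun x P hP hP1 => ?_⟩
  have htR : (0 : ℝ) < t := by exact_mod_cast ht
  have hρ : (∑ k, w k • F k x).IsDensity :=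
    isDensity_sum_smul (fun k _ => hw k) hw1 fun k _ => hF k x
  have hσ : ((t : ℝ)⁻¹ • ∑ j, F (i j) x).IsDensity := by
    rw [smul_sum]
    exact isDensity_sum_smul (fun _ _ => by positivity) (by simp [htR.ne']) fun j _ => hF (i j) x
  obtain ⟨A, hA, hPA⟩ : ∃ A ∈ T, ‖P - A‖ ≤ ε / 4 := by
    have := hTcover.subset_iUnion_closedBall
      (mem_closedBall_zero_iff.mpr (norm_le_one_of_posSemidef_of_posSemidef_one_sub hP hP1))
    simpa [dist_eq_norm, Real.coe_toNNReal _ (by positivity : 0 ≤ ε / 4)] using this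
  have hdev : (A * (∑ k, w k • F k x - (t : ℝ)⁻¹ • ∑ j, F (i j) x)).trace.re =
      ∑ k, w k * (A * F k x).trace.re - (t : ℝ)⁻¹ * ∑ j, (A * F (i j) x).trace.re := by
    simp [mul_sub, mul_sum, trace_sum]
  calc _ ≤ _ := abs_re_trace_mul_sub_le hρ hσ A P
    _ ≤ ε / 2 + 2 * (ε / 4) := by
      gcongr
      rw [hdev]; exact (hi (x, A) (mem_product.mpr ⟨mem_univ x, hA⟩)).le
    _ = ε := by ring

theorem natCast_mul_pow_mul_exp_lt_one {N m : ℕ} (hN : 2 ≤ N) {ε : ℝ} (hε : 0 < ε)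
    (hε2 : ε ≤ 1 / 2) {t : ℝ} (ht : 640 * (log N + m * log (1 / ε)) ≤ t * ε ^ 2) :
    N * (1 + 8 / ε) ^ (2 * m) * (2 * exp (-(t * ε ^ 2 / 64))) < 1 := by
  have hL : 0 < log N := log_pos (by exact_mod_cast hN)
  have hM : 0 ≤ log (1 / ε) := log_nonneg (by rw [le_div_iff₀ hε]; linarith)
  have hN2 : (2 : ℝ) ≤ exp (log N) := by rw [exp_log (by positivity)]; exact_mod_cast hN
  have hbase : 1 + 8 / ε ≤ exp (log (1 / ε)) ^ 5 := by
    have h2 : 2 ≤ 1 / ε := by rw [le_div_iff₀ hε]; linarith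
    have h16 : (2 : ℝ) ^ 4 ≤ (1 / ε) ^ 4 := pow_le_pow_left₀ (by norm_num) h2 4
    rw [exp_log (by positivity), show 8 / ε = 8 * (1 / ε) by ring]
    nlinarith
  calc (N : ℝ) * (1 + 8 / ε) ^ (2 * m) * (2 * exp (-(t * ε ^ 2 / 64)))
      ≤ exp (log N) * (exp (log (1 / ε)) ^ 5) ^ (2 * m) *
          (exp (log N) * exp (-(t * ε ^ 2 / 64))) := by
        rw [exp_log (by positivity : (0 : ℝ) < N)]
        gcongr
        rwa [← exp_log (by positivity : (0 : ℝ) < N)]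
    _ = exp (2 * log N + 10 * m * log (1 / ε) - t * ε ^ 2 / 64) := by
        rw [← pow_mul, ← exp_nat_mul, ← exp_add, ← exp_add, ← exp_add]
        congr 1; push_cast; ring
    _ < 1 := exp_lt_one_iff.mpr (by nlinarith)

/-- **Derandomization via sampling for matrix-valued function ensembles.**
There is a universal constant `C > 0` such that: for every finite nonempty input type `X`
with `|X| = d_X ≥ 2`, every finite distribution `w` over an ensemble `F` of maps from `X`
to density matrices on `ℂ^d`, and every `ε ∈ (0, 1/2)`, there are
`t ≤ ⌈C·(log d_X + d²·log(1/ε))/ε²⌉` samples `i₁, …, i_t` such that the uniform average of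
`F_{i_j}` approximates the `w`-average to within `ε` simultaneously against every input
`x ∈ X` and every BPOVM `Π`. -/
theorem derandomization_via_sampling :
    ∃ C : ℝ, 0 < C ∧
      ∀ (X : Type) [Fintype X], Nonempty X → 2 ≤ Fintype.card X →
      ∀ d : ℕ, 2 ≤ d →
      ∀ (ι : Type) [Fintype ι], Nonempty ι →
      ∀ w : ι → ℝ, (∀ k, 0 ≤ w k) → ∑ k, w k = 1 →
      ∀ F : ι → X → Matrix (Fin d) (Fin d) ℂ,
        (∀ k x, (F k x).PosSemidef ∧ (F k x).trace = 1) →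
      ∀ ε : ℝ, 0 < ε → ε < 1 / 2 →
        ∃ t : ℕ, 1 ≤ t ∧
          t ≤ ⌈C * (Real.log (Fintype.card X) + (d : ℝ) ^ 2 * Real.log (1 / ε)) / ε ^ 2⌉₊ ∧
          ∃ i : Fin t → ι, ∀ x : X, ∀ Pm : Matrix (Fin d) (Fin d) ℂ,
            Pm.PosSemidef → ((1 : Matrix (Fin d) (Fin d) ℂ) - Pm).PosSemidef →
            |((Pm * ((∑ k, w k • F k x) - (t : ℝ)⁻¹ • ∑ j : Fin t, F (i j) x)).trace).re| ≤
              ε := by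
  refine ⟨640, by norm_num, fun X _ _ hX d hd ι _ _ w hw hw1 F hF ε hε hε2 => ?_⟩
  have : NeZero d := ⟨by omega⟩
  set t := ⌈640 * (log (Fintype.card X) + (d : ℝ) ^ 2 * log (1 / ε)) / ε ^ 2⌉₊
  have hpos : 0 < 640 * (log (Fintype.card X) + (d : ℝ) ^ 2 * log (1 / ε)) / ε ^ 2 := by
    have := log_pos (by exact_mod_cast hX : (1 : ℝ) < Fintype.card X)
    have := log_nonneg (by rw [le_div_iff₀ hε]; linarith : (1 : ℝ) ≤ 1 / ε)
    positivity
  have ht : 640 * (log (Fintype.card X) + ((d ^ 2 : ℕ) : ℝ) * log (1 / ε)) ≤ t * ε ^ 2 := by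
    push_cast; exact (div_le_iff₀ (by positivity)).mp (Nat.le_ceil _)
  refine ⟨t, Nat.ceil_pos.mpr hpos, le_rfl, ?_⟩
  exact exists_sample_forall_abs_re_trace_mul_le hw hw1 hF hε (by linarith)
    (Nat.ceil_pos.mpr hpos) (by simpa using natCast_mul_pow_mul_exp_lt_one hX hε hε2.le ht)
end
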